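/- arXiv:2105.05136 — 8 statements merged into one kernel-verified Lean document; each statement's English description precedes it below -/
import Mathlib

section
/- Let Ω ⊆ ℂ be open and let φ : Ω × ℂ → ℂ be a map, smooth as a map of real variables, such that: (i) for every y₀ ∈ ℂ the map x ↦ φ(x, y₀) is holomorphic on Ω; (ii) for every x ∈ Ω the map φ_x := φ(x, ·) is a C^∞ diffeomorphism of ℂ. Define λ : Ω × ℂ → ℂ by λ(x,y) = (∂φ/∂x)(x, φ_x^{-1}(y)), where ∂φ/∂x is the complex derivative in the first variable. Then λ is smooth and satisfies the integrability equation ∂λ/∂x̄ + conj(λ)·∂λ/∂ȳ = 0 on Ω × ℂ. (A holomorphic motion defines a semiholomorphic foliation transverse to the vertical fibration.) -/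
open Complex ComplexConjugate

/-- Wirtinger derivative `∂f/∂x̄` of `f : ℂ² → ℂ`, via the real Fréchet derivative. -/
noncomputable def wdxbar (f : ℂ × ℂ → ℂ) (p : ℂ × ℂ) : ℂ :=
  (1 / 2 : ℂ) * (fderiv ℝ f p (1, 0) + Complex.I * fderiv ℝ f p (Complex.I, 0))

/-- Wirtinger derivative `∂f/∂ȳ`. -/
noncomputable def wdybar (f : ℂ × ℂ → ℂ) (p : ℂ × ℂ) : ℂ :=
  (1 / 2 : ℂ) * (fderiv ℝ f p (0, 1) + Complex.I * fderiv ℝ f p (0, Complex.I))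

theorem deriv_fst_eq {φ : ℂ × ℂ → ℂ} {p : ℂ × ℂ} (hd : DifferentiableAt ℝ φ p)
    (hh : DifferentiableAt ℂ (fun x => φ (x, p.2)) p.1) :
    deriv (fun x => φ (x, p.2)) p.1 = fderiv ℝ φ p (1, 0) := by
  have h1 : HasFDerivAt (fun x : ℂ => (x, p.2)) (ContinuousLinearMap.inl ℝ ℂ ℂ) p.1 :=
    hasFDerivAt_prodMk_left _ _
  have h2 : HasFDerivAt (fun x => φ (x, p.2))
      ((fderiv ℝ φ p).comp (ContinuousLinearMap.inl ℝ ℂ ℂ)) p.1 := by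
    have h := hd.hasFDerivAt
    have := h.comp p.1 h1
    exact this
  have h3 : HasFDerivAt (fun x => φ (x, p.2))
      ((ContinuousLinearMap.smulRight (1 : ℂ →L[ℂ] ℂ)
        (deriv (fun x => φ (x, p.2)) p.1)).restrictScalars ℝ) p.1 :=
    (hh.hasDerivAt.hasFDerivAt).restrictScalars ℝ
  have h4 := h3.unique h2
  have h5 := congrArg (fun (L : ℂ →L[ℝ] ℂ) => L 1) h4
  simpa using h5

theorem psi_smooth (Ω : Set ℂ) (hΩ : IsOpen Ω) (φ ψ : ℂ × ℂ → ℂ)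
    (hφsmooth : ContDiffOn ℝ (⊤ : ℕ∞) φ (Ω ×ˢ Set.univ))
    (hψy : ∀ x ∈ Ω, ContDiff ℝ (⊤ : ℕ∞) (fun y => ψ (x, y)))
    (hlinv : ∀ x ∈ Ω, ∀ y : ℂ, ψ (x, φ (x, y)) = y)
    (hrinv : ∀ x ∈ Ω, ∀ y : ℂ, φ (x, ψ (x, y)) = y)
    (q : ℂ × ℂ) (hq : q ∈ Ω ×ˢ (Set.univ : Set ℂ)) :
    ContDiffAt ℝ (⊤ : ℕ∞) (fun p : ℂ × ℂ => (p.1, ψ p)) q := by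
  have hx : q.1 ∈ Ω := hq.1
  set s : Set (ℂ × ℂ) := Ω ×ˢ Set.univ with hsdef
  have hs : IsOpen s := hΩ.prod isOpen_univ
  set a : ℂ × ℂ := (q.1, ψ q) with hadef
  have ha : a ∈ s := ⟨hx, trivial⟩
  have hmem : s ∈ nhds a := hs.mem_nhds ha
  have hd : DifferentiableAt ℝ φ a := ((hφsmooth.contDiffAt hmem).differentiableAt (by simp))
  set D : ℂ × ℂ →L[ℝ] ℂ := fderiv ℝ φ a with hDdef
  set B : ℂ →L[ℝ] ℂ := D.comp (ContinuousLinearMap.inr ℝ ℂ ℂ) with hBdef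
  have hB : HasFDerivAt (fun y => φ (q.1, y)) B a.2 := by
    have h1 : HasFDerivAt (fun y : ℂ => (q.1, y)) (ContinuousLinearMap.inr ℝ ℂ ℂ) a.2 :=
      hasFDerivAt_prodMk_right _ _
    have := hd.hasFDerivAt.comp a.2 h1
    exact this
  set z : ℂ := φ (q.1, a.2) with hzdef
  set C : ℂ →L[ℝ] ℂ := fderiv ℝ (fun w => ψ (q.1, w)) z with hCdef
  have hC : HasFDerivAt (fun w => ψ (q.1, w)) C z :=
    (((hψy q.1 hx).differentiable (by simp)) z).hasFDerivAt
  have hgf : (fun y => ψ (q.1, φ (q.1, y))) = id := funext fun y => hlinv q.1 hx y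
  have hfg : (fun w => φ (q.1, ψ (q.1, w))) = id := funext fun w => hrinv q.1 hx w
  have hCB : ∀ v, C (B v) = v := by
    intro v
    have hcomp : HasFDerivAt (fun y => ψ (q.1, φ (q.1, y))) (C.comp B) a.2 := by have := hC.comp a.2 hB; exact this
    rw [hgf] at hcomp
    have := hcomp.unique (hasFDerivAt_id a.2)
    calc C (B v) = (C.comp B) v := rfl
    _ = v := by rw [this]; rfl
  have hBC : ∀ v, B (C v) = v := by
    intro v
    have hz2 : ψ (q.1, z) = a.2 := hlinv q.1 hx a.2
    have hB' : HasFDerivAt (fun y => φ (q.1, y)) B (ψ (q.1, z)) := by rwa [hz2]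
    have hcomp : HasFDerivAt (fun w => φ (q.1, ψ (q.1, w))) (B.comp C) z := by have := hB'.comp z hC; exact this
    rw [hfg] at hcomp
    have := hcomp.unique (hasFDerivAt_id z)
    calc B (C v) = (B.comp C) v := rfl
    _ = v := by rw [this]; rfl
  set Beq : ℂ ≃L[ℝ] ℂ := ContinuousLinearEquiv.equivOfInverse B C hCB hBC with hBeqdef
  have hsplit : ∀ u v : ℂ, D (u, v) = D (u, 0) + D (0, v) := by
    intro u v
    rw [← map_add]
    norm_num
  set F : ℂ × ℂ →L[ℝ] ℂ × ℂ := (ContinuousLinearMap.fst ℝ ℂ ℂ).prod D with hFdef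
  set A : ℂ →L[ℝ] ℂ := D.comp (ContinuousLinearMap.inl ℝ ℂ ℂ) with hAdef
  set G : ℂ × ℂ →L[ℝ] ℂ × ℂ := (ContinuousLinearMap.fst ℝ ℂ ℂ).prod
    ((Beq.symm : ℂ →L[ℝ] ℂ).comp
      ((ContinuousLinearMap.snd ℝ ℂ ℂ) - A.comp (ContinuousLinearMap.fst ℝ ℂ ℂ))) with hGdef
  have hleft : Function.LeftInverse G F := by
    rintro ⟨u, v⟩
    have h1 : F (u, v) = (u, D (u, v)) := rfl
    have h2 : G (u, D (u, v)) = (u, C (D (u, v) - D (u, 0))) := rfl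
    rw [h1, h2, hsplit u v]
    simp only [add_sub_cancel_left]
    have : D (0, v) = B v := by simp [hBdef]
    rw [this, hCB v]
  have hright : Function.RightInverse G F := by
    rintro ⟨u, w⟩
    have h1 : G (u, w) = (u, C (w - D (u, 0))) := rfl
    rw [h1]
    have h2 : F (u, C (w - D (u, 0))) = (u, D (u, C (w - D (u, 0)))) := rfl
    rw [h2, hsplit u _]
    have : D (0, C (w - D (u, 0))) = B (C (w - D (u, 0))) := by simp [hBdef]
    rw [this, hBC]
    simp
  set e : (ℂ × ℂ) ≃L[ℝ] (ℂ × ℂ) := ContinuousLinearEquiv.equivOfInverse F G hleft hright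
    with hedef
  set Φ : ℂ × ℂ → ℂ × ℂ := fun p => (p.1, φ p) with hΦdef
  have hΦd : HasFDerivAt Φ (e : (ℂ × ℂ) →L[ℝ] (ℂ × ℂ)) a := by
    have hcoe : (e : (ℂ × ℂ) →L[ℝ] (ℂ × ℂ)) = F := rfl
    rw [hcoe]
    exact (hasFDerivAt_fst).prodMk hd.hasFDerivAt
  have hΦc : ContDiffAt ℝ (⊤ : ℕ∞) Φ a :=
    contDiffAt_fst.prodMk (hφsmooth.contDiffAt hmem)
  have hΦa : Φ a = q := by
    have : φ (q.1, ψ q) = q.2 := by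
      have := hrinv q.1 hx q.2
      simpa using this
    simp [hΦdef, hadef, this]
  have hinv : ContDiffAt ℝ (⊤ : ℕ∞) (hΦc.localInverse hΦd (by simp)) (Φ a) :=
    hΦc.to_localInverse hΦd (by simp)
  have hstrict := hΦc.hasStrictFDerivAt' hΦd (by simp)
  have hev : ∀ᶠ p in nhds a, (fun p : ℂ × ℂ => (p.1, ψ p)) (Φ p) = p := by
    filter_upwards [hmem] with p hp
    have : ψ (p.1, φ p) = p.2 := by
      have := hlinv p.1 hp.1 p.2
      simpa using this
    simp [hΦdef, this]
  have huniq := hstrict.localInverse_unique (g := fun p : ℂ × ℂ => (p.1, ψ p)) hev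
  have heq : (fun p : ℂ × ℂ => (p.1, ψ p)) =ᶠ[nhds (Φ a)] (hΦc.localInverse hΦd (by simp)) := huniq
  have := hinv.congr_of_eventuallyEq heq
  rwa [hΦa] at this

/-- A holomorphic motion `φ` over an open set `Ω ⊆ ℂ` (smooth in the real variables,
holomorphic in `x`, a `C^∞` diffeomorphism of `ℂ` in `y` for each fixed `x`, with
fibrewise inverse `ψ`) defines a semiholomorphic foliation transverse to the vertical
fibration: the slope `λ(x,y) = (∂φ/∂x)(x, φ_x⁻¹(y))` is smooth and satisfies the
integrability equation `∂λ/∂x̄ + conj(λ)·∂λ/∂ȳ = 0` on `Ω × ℂ`. -/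
theorem stmt2 (Ω : Set ℂ) (hΩ : IsOpen Ω)
    (φ ψ : ℂ × ℂ → ℂ)
    (hφsmooth : ContDiffOn ℝ (⊤ : ℕ∞) φ (Ω ×ˢ Set.univ))
    (hφholo : ∀ y₀ : ℂ, DifferentiableOn ℂ (fun x => φ (x, y₀)) Ω)
    (hφy : ∀ x ∈ Ω, ContDiff ℝ (⊤ : ℕ∞) (fun y => φ (x, y)))
    (hψy : ∀ x ∈ Ω, ContDiff ℝ (⊤ : ℕ∞) (fun y => ψ (x, y)))
    (hlinv : ∀ x ∈ Ω, ∀ y : ℂ, ψ (x, φ (x, y)) = y)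
    (hrinv : ∀ x ∈ Ω, ∀ y : ℂ, φ (x, ψ (x, y)) = y)
    (lam : ℂ × ℂ → ℂ)
    (hlam : ∀ p : ℂ × ℂ, lam p = deriv (fun x => φ (x, ψ p)) p.1) :
    ContDiffOn ℝ (⊤ : ℕ∞) lam (Ω ×ˢ Set.univ) ∧
      ∀ p ∈ Ω ×ˢ (Set.univ : Set ℂ),
        wdxbar lam p + conj (lam p) * wdybar lam p = 0 := by
  have hs : IsOpen (Ω ×ˢ (Set.univ : Set ℂ)) := hΩ.prod isOpen_univ
  have hΨ : ∀ q ∈ Ω ×ˢ (Set.univ : Set ℂ),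
      ContDiffAt ℝ (⊤ : ℕ∞) (fun p : ℂ × ℂ => (p.1, ψ p)) q :=
    fun q hq => psi_smooth Ω hΩ φ ψ hφsmooth hψy hlinv hrinv q hq
  -- smoothness of the partial derivative d1
  have hd1 : ContDiffOn ℝ (⊤ : ℕ∞) (fun p : ℂ × ℂ => fderiv ℝ φ p (1, 0)) (Ω ×ˢ Set.univ) := by
    have h := hφsmooth.fderiv_of_isOpen (m := (⊤ : ℕ∞)) hs (by simp)
    exact h.clm_apply contDiffOn_const
  -- lam agrees with d1 ∘ Ψ on s
  have hkey : ∀ t ∈ Ω, ∀ y₀ : ℂ,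
      deriv (fun x => φ (x, y₀)) t = fderiv ℝ φ (t, y₀) (1, 0) := by
    intro t ht y₀
    have hd : DifferentiableAt ℝ φ (t, y₀) :=
      ((hφsmooth.contDiffAt (hs.mem_nhds ⟨ht, trivial⟩)).differentiableAt (by simp))
    have hh : DifferentiableAt ℂ (fun x => φ (x, y₀)) t :=
      (hφholo y₀).differentiableAt (hΩ.mem_nhds ht)
    exact deriv_fst_eq hd hh
  have hlameq : ∀ p ∈ Ω ×ˢ (Set.univ : Set ℂ),
      lam p = fderiv ℝ φ (p.1, ψ p) (1, 0) := by
    intro p hp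
    rw [hlam p, hkey p.1 hp.1 (ψ p)]
  have hlams : ContDiffOn ℝ (⊤ : ℕ∞) lam (Ω ×ˢ Set.univ) := by
    have hcomp : ContDiffOn ℝ (⊤ : ℕ∞) (fun p : ℂ × ℂ => fderiv ℝ φ (p.1, ψ p) (1, 0))
        (Ω ×ˢ Set.univ) := by
      intro p hp
      have h1 : ContDiffAt ℝ (⊤ : ℕ∞) (fun q : ℂ × ℂ => fderiv ℝ φ q (1, 0)) (p.1, ψ p) :=
        hd1.contDiffAt (hs.mem_nhds ⟨hp.1, trivial⟩)
      exact ((h1.comp p (hΨ p hp))).contDiffWithinAt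
    exact hcomp.congr hlameq
  refine ⟨hlams, ?_⟩
  intro p hp
  have hx : p.1 ∈ Ω := hp.1
  set y₀ : ℂ := ψ p with hy₀
  set g : ℂ → ℂ := fun t => φ (t, y₀) with hgdef
  have hg : DifferentiableOn ℂ g Ω := hφholo y₀
  have hg' : DifferentiableAt ℂ (deriv g) p.1 :=
    ((hg.analyticOnNhd hΩ).deriv.differentiableOn).differentiableAt (hΩ.mem_nhds hx)
  have hgx : g p.1 = p.2 := by
    have := hrinv p.1 hx p.2
    simpa [hgdef, hy₀] using this
  have hgderiv : HasDerivAt g (lam p) p.1 := by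
    have h1 : HasDerivAt g (deriv g p.1) p.1 :=
      (hg.differentiableAt (hΩ.mem_nhds hx)).hasDerivAt
    have h2 : lam p = deriv g p.1 := hlam p
    rwa [h2]
  set H : ℂ → ℂ := fun t => lam (t, g t) with hHdef
  have hHev : H =ᶠ[nhds p.1] deriv g := by
    filter_upwards [hΩ.mem_nhds hx] with t ht
    have h1 : ψ (t, g t) = y₀ := by
      have := hlinv t ht y₀
      simpa [hgdef] using this
    calc H t = deriv (fun x => φ (x, ψ (t, g t))) t := hlam (t, g t)
    _ = deriv g t := by rw [h1]
  set c : ℂ := deriv (deriv g) p.1 with hcdef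
  have hH1 : HasFDerivAt H ((ContinuousLinearMap.smulRight (1 : ℂ →L[ℂ] ℂ) c).restrictScalars ℝ)
      p.1 := by
    have := (hg'.hasDerivAt.hasFDerivAt).restrictScalars ℝ
    exact this.congr_of_eventuallyEq hHev
  set L : ℂ × ℂ →L[ℝ] ℂ := fderiv ℝ lam p with hLdef
  have hlamda : HasFDerivAt lam L p :=
    ((hlams.contDiffAt (hs.mem_nhds hp)).differentiableAt (by simp)).hasFDerivAt
  have hF : HasFDerivAt (fun t : ℂ => (t, g t))
      ((ContinuousLinearMap.id ℝ ℂ).prod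
        ((ContinuousLinearMap.smulRight (1 : ℂ →L[ℂ] ℂ) (lam p)).restrictScalars ℝ)) p.1 :=
    (hasFDerivAt_id p.1).prodMk (hgderiv.hasFDerivAt.restrictScalars ℝ)
  have hlamda' : HasFDerivAt lam L (p.1, g p.1) := by
    rw [hgx]
    simpa using hlamda
  have hH2 : HasFDerivAt H (L.comp ((ContinuousLinearMap.id ℝ ℂ).prod
      ((ContinuousLinearMap.smulRight (1 : ℂ →L[ℂ] ℂ) (lam p)).restrictScalars ℝ))) p.1 :=
    hlamda'.comp p.1 hF
  have hun := hH1.unique hH2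
  have h1 : c = L (1, lam p) := by
    have := congrArg (fun (T : ℂ →L[ℝ] ℂ) => T 1) hun
    simpa using this
  have hI : Complex.I * c = L (Complex.I, Complex.I * lam p) := by
    have := congrArg (fun (T : ℂ →L[ℝ] ℂ) => T Complex.I) hun
    simpa [smul_eq_mul, mul_comm] using this
  have hrel : L (Complex.I, Complex.I * lam p) = Complex.I * L (1, lam p) := by
    rw [← hI, h1]
  set r : ℝ := (lam p).re with hrdef
  set sℑ : ℝ := (lam p).im with hsdef2
  have hv1 : ((1 : ℂ), lam p) = ((1 : ℂ), (0 : ℂ)) + r • ((0 : ℂ), (1 : ℂ))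
      + sℑ • ((0 : ℂ), Complex.I) := by
    refine Prod.ext ?_ ?_ <;>
      simp [Prod.smul_mk, Complex.real_smul, hrdef, hsdef2, Complex.re_add_im]
  have hIlam : Complex.I * lam p = -(sℑ : ℂ) + (r : ℂ) * Complex.I := by
    rw [← Complex.re_add_im (lam p), ← hrdef, ← hsdef2]
    ring_nf
    rw [Complex.I_sq]
    ring
  have hv2 : ((Complex.I : ℂ), Complex.I * lam p) = ((Complex.I : ℂ), (0 : ℂ))
      + (-sℑ) • ((0 : ℂ), (1 : ℂ)) + r • ((0 : ℂ), Complex.I) := by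
    refine Prod.ext ?_ ?_
    · simp
    · simp [Prod.smul_mk, Complex.real_smul, hIlam]
  have hrel' : L (Complex.I, 0) + (-(sℑ : ℂ)) * L (0, 1) + (r : ℂ) * L (0, Complex.I)
      = Complex.I * (L (1, 0) + (r : ℂ) * L (0, 1) + (sℑ : ℂ) * L (0, Complex.I)) := by
    have e1 : L (1, lam p) = L (1, 0) + (r : ℂ) * L (0, 1) + (sℑ : ℂ) * L (0, Complex.I) := by
      rw [hv1, map_add, map_add, L.map_smul, L.map_smul, Complex.real_smul, Complex.real_smul]
    have e2 : L (Complex.I, Complex.I * lam p) = L (Complex.I, 0) + (-(sℑ : ℂ)) * L (0, 1)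
        + (r : ℂ) * L (0, Complex.I) := by
      rw [hv2, map_add, map_add, L.map_smul, L.map_smul, Complex.real_smul, Complex.real_smul]
      push_cast
      ring
    rw [← e1, ← e2, hrel]
  have hconj : (conj (lam p) : ℂ) = (r : ℂ) - (sℑ : ℂ) * Complex.I := by
    apply Complex.ext <;> simp [hrdef, hsdef2]
  show wdxbar lam p + conj (lam p) * wdybar lam p = 0
  rw [wdxbar, wdybar, ← hLdef, hconj]
  linear_combination (Complex.I / 2) * hrel'
    + ((L (1, 0) + (r : ℂ) * L (0, 1)) / 2) * Complex.I_mul_I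
end

section
/- Let U ⊆ ℂ² be open and λ : U → ℂ smooth satisfying the integrability equation ∂λ/∂x̄ + conj(λ)·∂λ/∂ȳ = 0. Let Ω ⊆ ℂ be open, let α, β : Ω → ℂ be holomorphic with β nowhere vanishing and α′ nowhere vanishing, and let V = {(x,y) ∈ Ω × ℂ : (α(x), β(x)·y) ∈ U}. Define the pulled-back slope λ̃ : V → ℂ by λ̃(x,y) = (λ(α(x), β(x)·y)·α′(x) − β′(x)·y)/β(x). Then λ̃ is smooth and satisfies the integrability equation ∂λ̃/∂x̄ + conj(λ̃)·∂λ̃/∂ȳ = 0 on V. (The semiholomorphy of a foliation is preserved under the holomorphic change of coordinates Φ(x,y) = (α(x), β(x)y).) -/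
open Complex ComplexConjugate

lemma wbar_comb (L : ℂ × ℂ →L[ℝ] ℂ) (u v : ℂ) :
    (1/2 : ℂ) * (L (u, v) + Complex.I * L (Complex.I * u, Complex.I * v)) =
      ((1/2 : ℂ) * (L (1, 0) + Complex.I * L (Complex.I, 0))) * conj u +
      ((1/2 : ℂ) * (L (0, 1) + Complex.I * L (0, Complex.I))) * conj v := by
  have h1 : (u, v) = u.re • ((1:ℂ), (0:ℂ)) + u.im • (Complex.I, 0)
      + v.re • ((0:ℂ), (1:ℂ)) + v.im • ((0:ℂ), Complex.I) := by
    simp [Prod.ext_iff, Complex.ext_iff]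
  have h2 : (Complex.I * u, Complex.I * v) = (-u.im) • ((1:ℂ), (0:ℂ)) + u.re • (Complex.I, 0)
      + (-v.im) • ((0:ℂ), (1:ℂ)) + v.re • ((0:ℂ), Complex.I) := by
    simp [Prod.ext_iff, Complex.ext_iff]
  rw [h1, h2]
  simp only [map_add, map_smul, Complex.real_smul, Complex.ofReal_neg]
  have hcu : (starRingEnd ℂ) u = (u.re : ℂ) - u.im * Complex.I := by
    simp [Complex.ext_iff]
  have hcv : (starRingEnd ℂ) v = (v.re : ℂ) - v.im * Complex.I := by
    simp [Complex.ext_iff]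
  rw [hcu, hcv]
  linear_combination ((1/2 : ℂ) * ((u.im : ℂ) * L (Complex.I, 0) + (v.im : ℂ) * L (0, Complex.I))) * Complex.I_sq

/-- Semiholomorphy is preserved by the holomorphic change of coordinates
`Φ(x,y) = (α(x), β(x)·y)`: if `λ` is a smooth slope on an open `U ⊆ ℂ²` satisfying the
integrability equation, `α, β` are holomorphic on an open `Ω ⊆ ℂ` with `β` and `α′`
nowhere vanishing, then the pulled-back slope
`λ̃(x,y) = (λ(α(x), β(x)y)·α′(x) − β′(x)·y)/β(x)` is smooth and satisfies the
integrability equation on `V = Φ⁻¹(U)`. -/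
theorem stmt4 (U : Set (ℂ × ℂ)) (hU : IsOpen U)
    (lam : ℂ × ℂ → ℂ)
    (hsm : ContDiffOn ℝ (⊤ : ℕ∞) lam U)
    (hint : ∀ p ∈ U, wdxbar lam p + conj (lam p) * wdybar lam p = 0)
    (Ω : Set ℂ) (hΩ : IsOpen Ω)
    (α β : ℂ → ℂ)
    (hα : DifferentiableOn ℂ α Ω) (hβ : DifferentiableOn ℂ β Ω)
    (hβ0 : ∀ x ∈ Ω, β x ≠ 0) (hα' : ∀ x ∈ Ω, deriv α x ≠ 0)
    (V : Set (ℂ × ℂ))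
    (hV : V = {p : ℂ × ℂ | p.1 ∈ Ω ∧ (α p.1, β p.1 * p.2) ∈ U})
    (lamT : ℂ × ℂ → ℂ)
    (hlamT : ∀ p : ℂ × ℂ, lamT p =
      (lam (α p.1, β p.1 * p.2) * deriv α p.1 - deriv β p.1 * p.2) / β p.1) :
    ContDiffOn ℝ (⊤ : ℕ∞) lamT V ∧
      ∀ p ∈ V, wdxbar lamT p + conj (lamT p) * wdybar lamT p = 0 := by
  have hlamT' : lamT = fun p : ℂ × ℂ =>
      (lam (α p.1, β p.1 * p.2) * deriv α p.1 - deriv β p.1 * p.2) * (β p.1)⁻¹ := by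
    funext p; rw [hlamT p, div_eq_mul_inv]
  subst hlamT'
  subst hV
  have hαA : AnalyticOnNhd ℂ α Ω := hα.analyticOnNhd hΩ
  have hβA : AnalyticOnNhd ℂ β Ω := hβ.analyticOnNhd hΩ
  have hdαA : AnalyticOnNhd ℂ (deriv α) Ω := hαA.deriv
  have hdβA : AnalyticOnNhd ℂ (deriv β) Ω := hβA.deriv
  set V : Set (ℂ × ℂ) := {p : ℂ × ℂ | p.1 ∈ Ω ∧ (α p.1, β p.1 * p.2) ∈ U} with hVdef
  have cfst : ContDiffOn ℝ (⊤ : ℕ∞) (fun p : ℂ × ℂ => p.1) V := contDiff_fst.contDiffOn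
  have mapsΩ : Set.MapsTo (fun p : ℂ × ℂ => p.1) V Ω := fun p hp => hp.1
  have cα : ContDiffOn ℝ (⊤ : ℕ∞) (fun p : ℂ × ℂ => α p.1) V :=
    ((hαA.contDiffOn hΩ.uniqueDiffOn).restrict_scalars ℝ).comp cfst mapsΩ
  have cβ : ContDiffOn ℝ (⊤ : ℕ∞) (fun p : ℂ × ℂ => β p.1) V :=
    ((hβA.contDiffOn hΩ.uniqueDiffOn).restrict_scalars ℝ).comp cfst mapsΩ
  have cdα : ContDiffOn ℝ (⊤ : ℕ∞) (fun p : ℂ × ℂ => deriv α p.1) V :=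
    ((hdαA.contDiffOn hΩ.uniqueDiffOn).restrict_scalars ℝ).comp cfst mapsΩ
  have cdβ : ContDiffOn ℝ (⊤ : ℕ∞) (fun p : ℂ × ℂ => deriv β p.1) V :=
    ((hdβA.contDiffOn hΩ.uniqueDiffOn).restrict_scalars ℝ).comp cfst mapsΩ
  have csnd : ContDiffOn ℝ (⊤ : ℕ∞) (fun p : ℂ × ℂ => p.2) V := contDiff_snd.contDiffOn
  have cΦ : ContDiffOn ℝ (⊤ : ℕ∞) (fun p : ℂ × ℂ => (α p.1, β p.1 * p.2)) V :=
    cα.prodMk (cβ.mul csnd)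
  have cF : ContDiffOn ℝ (⊤ : ℕ∞) (fun p : ℂ × ℂ => lam (α p.1, β p.1 * p.2)) V :=
    hsm.comp cΦ (fun p hp => hp.2)
  have cinv : ContDiffOn ℝ (⊤ : ℕ∞) (fun p : ℂ × ℂ => (β p.1)⁻¹) V :=
    cβ.inv (fun p hp => hβ0 _ hp.1)
  have csm : ContDiffOn ℝ (⊤ : ℕ∞) (fun p : ℂ × ℂ =>
      (lam (α p.1, β p.1 * p.2) * deriv α p.1 - deriv β p.1 * p.2) * (β p.1)⁻¹) V :=
    ((cF.mul cdα).sub (cdβ.mul csnd)).mul cinv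
  refine ⟨csm, ?_⟩
  rintro ⟨x, y⟩ ⟨hx, hpU⟩
  have hβx := hβ0 x hx
  have hda : HasDerivAt α (deriv α x) x := (hαA x hx).differentiableAt.hasDerivAt
  have hdb : HasDerivAt β (deriv β x) x := (hβA x hx).differentiableAt.hasDerivAt
  have hda2 : HasDerivAt (deriv α) (deriv (deriv α) x) x := (hdαA x hx).differentiableAt.hasDerivAt
  have hdb2 : HasDerivAt (deriv β) (deriv (deriv β) x) x := (hdβA x hx).differentiableAt.hasDerivAt
  have hA : HasFDerivAt (fun q : ℂ × ℂ => α q.1) _ (x, y) :=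
    (hda.hasFDerivAt.restrictScalars ℝ).comp (x, y) hasFDerivAt_fst
  have hB : HasFDerivAt (fun q : ℂ × ℂ => β q.1) _ (x, y) :=
    (hdb.hasFDerivAt.restrictScalars ℝ).comp (x, y) hasFDerivAt_fst
  have hA2 : HasFDerivAt (fun q : ℂ × ℂ => deriv α q.1) _ (x, y) :=
    HasFDerivAt.comp (g := deriv α) (f := Prod.fst) (x, y) (hda2.hasFDerivAt.restrictScalars ℝ) hasFDerivAt_fst
  have hB2 : HasFDerivAt (fun q : ℂ × ℂ => deriv β q.1) _ (x, y) :=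
    HasFDerivAt.comp (g := deriv β) (f := Prod.fst) (x, y) (hdb2.hasFDerivAt.restrictScalars ℝ) hasFDerivAt_fst
  have hBy : HasFDerivAt (fun q : ℂ × ℂ => β q.1 * q.2) _ (x, y) := hB.mul hasFDerivAt_snd
  have hΦ : HasFDerivAt (fun q : ℂ × ℂ => (α q.1, β q.1 * q.2)) _ (x, y) := hA.prodMk hBy
  have hlamd : DifferentiableAt ℝ lam (α x, β x * y) :=
    (hsm.contDiffAt (hU.mem_nhds hpU)).differentiableAt (by simp)
  have hL : HasFDerivAt lam (fderiv ℝ lam (α x, β x * y)) (α x, β x * y) := hlamd.hasFDerivAt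
  have hF : HasFDerivAt (fun q : ℂ × ℂ => lam (α q.1, β q.1 * q.2)) _ (x, y) := hL.comp (x, y) hΦ
  have hN : HasFDerivAt (fun q : ℂ × ℂ =>
      lam (α q.1, β q.1 * q.2) * deriv α q.1 - deriv β q.1 * q.2) _ (x, y) :=
    (hF.mul hA2).sub (hB2.mul hasFDerivAt_snd)
  have hInv : HasFDerivAt (fun q : ℂ × ℂ => (β q.1)⁻¹) _ (x, y) :=
    (hasFDerivAt_inv' (𝕜 := ℝ) hβx).comp (x, y) hB
  have hT : HasFDerivAt (fun q : ℂ × ℂ =>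
      (lam (α q.1, β q.1 * q.2) * deriv α q.1 - deriv β q.1 * q.2) * (β q.1)⁻¹) _ (x, y) :=
    hN.mul hInv
  have hkey := hint (α x, β x * y) hpU
  simp only [wdxbar, wdybar] at hkey ⊢
  rw [hT.fderiv]
  simp only [ContinuousLinearMap.add_apply, ContinuousLinearMap.smul_apply,
    ContinuousLinearMap.sub_apply, ContinuousLinearMap.coe_comp', Function.comp_apply,
    ContinuousLinearMap.coe_fst', ContinuousLinearMap.coe_snd',
    ContinuousLinearMap.coe_restrictScalars', ContinuousLinearMap.smulRight_apply,
    ContinuousLinearMap.toSpanSingleton_apply,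
    ContinuousLinearMap.one_apply, ContinuousLinearMap.prod_apply,
    ContinuousLinearMap.neg_apply, ContinuousLinearMap.mulLeftRight_apply,
    smul_eq_mul, one_mul, mul_zero, zero_mul, mul_one, add_zero, zero_add,
    map_mul, map_sub, map_inv₀]
  set L := fderiv ℝ lam (α x, β x * y) with hLdef
  set a := deriv α x with ha
  set b := deriv β x with hb
  set a2 := deriv (deriv α) x with ha2
  set b2 := deriv (deriv β) x with hb2
  set B := β x with hBB
  set lv := lam (α x, B * y) with hlv
  have w1 := wbar_comb L a (y * b)
  rw [show Complex.I * (y * b) = y * (Complex.I * b) by ring] at w1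
  simp only [map_mul] at w1
  have w2 := wbar_comb L 0 B
  rw [show Complex.I * (0:ℂ) = 0 by ring, show Complex.I * B = B * Complex.I by ring] at w2
  simp only [map_zero, mul_zero, zero_add] at w2
  have hcB : (starRingEnd ℂ) B ≠ 0 := by
    simpa using hβx
  have hc : (starRingEnd ℂ) B * ((starRingEnd ℂ) B)⁻¹ = 1 := mul_inv_cancel₀ hcB
  linear_combination (a * B⁻¹) * w1
    + (((starRingEnd ℂ) lv * (starRingEnd ℂ) a - (starRingEnd ℂ) b * (starRingEnd ℂ) y)
        * ((starRingEnd ℂ) B)⁻¹ * a * B⁻¹) * w2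
    + ((starRingEnd ℂ) a * a * B⁻¹) * hkey
    + (((starRingEnd ℂ) lv * (starRingEnd ℂ) a - (starRingEnd ℂ) b * (starRingEnd ℂ) y)
        * a * B⁻¹ * ((1/2 : ℂ) * (L (0, 1) + Complex.I * L (0, Complex.I)))) * hc
    + ((1/2 : ℂ) * (-((lv * a - b * y) * b * B⁻¹ * B⁻¹) + B⁻¹ * lv * a2 - B⁻¹ * y * b2)
        - ((starRingEnd ℂ) lv * (starRingEnd ℂ) a - (starRingEnd ℂ) b * (starRingEnd ℂ) y)
          * ((starRingEnd ℂ) B)⁻¹ * (1/2 : ℂ) * B⁻¹ * b) * Complex.I_sq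
end

section
/- Let U ⊆ ℂ² be open and λ : U → ℂ smooth satisfying the integrability equation ∂λ/∂x̄ + conj(λ)·∂λ/∂ȳ = 0. Set a := ∂λ/∂y and b := ∂λ/∂ȳ, and let ∂̄_F f := ∂f/∂x̄ + conj(λ)·∂f/∂ȳ. Then on U one has the two identities: ∂̄_F a + conj(b)·b = 0 and ∂̄_F b + conj(a)·b = 0. -/
open Complex ComplexConjugate

/-- Wirtinger derivative `∂f/∂y`. -/
noncomputable def wdy (f : ℂ × ℂ → ℂ) (p : ℂ × ℂ) : ℂ :=
  (1 / 2 : ℂ) * (fderiv ℝ f p (0, 1) - Complex.I * fderiv ℝ f p (0, Complex.I))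

/-- The leafwise operator `∂̄_F f = ∂f/∂x̄ + conj(λ)·∂f/∂ȳ`. -/
noncomputable def dFbar (lam f : ℂ × ℂ → ℂ) (p : ℂ × ℂ) : ℂ :=
  wdxbar f p + conj (lam p) * wdybar f p

/-- For a smooth slope `λ` satisfying the integrability equation, the coefficients
`a = ∂λ/∂y` and `b = ∂λ/∂ȳ` of Bott's partial connection satisfy
`∂̄_F a + conj(b)·b = 0` and `∂̄_F b + conj(a)·b = 0` on `U`. -/
theorem stmt7 (U : Set (ℂ × ℂ)) (hU : IsOpen U)
    (lam : ℂ × ℂ → ℂ)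
    (hsm : ContDiffOn ℝ (⊤ : ℕ∞) lam U)
    (hint : ∀ p ∈ U, wdxbar lam p + conj (lam p) * wdybar lam p = 0)
    (a b : ℂ × ℂ → ℂ)
    (ha : ∀ p : ℂ × ℂ, a p = wdy lam p)
    (hb : ∀ p : ℂ × ℂ, b p = wdybar lam p) :
    ∀ p ∈ U,
      dFbar lam a p + conj (b p) * b p = 0 ∧
      dFbar lam b p + conj (a p) * b p = 0 := by
  intro p hp
  have hev : ∀ᶠ q in nhds p, HasFDerivAt lam (fderiv ℝ lam q) q := by
    filter_upwards [hU.mem_nhds hp] with q hq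
    exact ((hsm.contDiffAt (hU.mem_nhds hq)).differentiableAt (by simp)).hasFDerivAt
  have hD : HasFDerivAt (fderiv ℝ lam) (fderiv ℝ (fderiv ℝ lam) p) p :=
    (((hsm.contDiffAt (hU.mem_nhds hp)).fderiv_right (m := 1) (WithTop.coe_le_coe.mpr le_top)).differentiableAt
      one_ne_zero).hasFDerivAt
  set D2 := fderiv ℝ (fderiv ℝ lam) p with hD2def
  set F := fderiv ℝ lam p with hFdef
  have hsymm : ∀ v w, D2 v w = D2 w v := fun v w =>
    second_derivative_symmetric_of_eventually hev hD v w
  have happ : ∀ v : ℂ × ℂ, HasFDerivAt (fun q => fderiv ℝ lam q v)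
      ((ContinuousLinearMap.apply ℝ ℂ v).comp D2) p :=
    fun v => (ContinuousLinearMap.apply ℝ ℂ v).hasFDerivAt.comp p hD
  have hconj : HasFDerivAt (fun q => conj (lam q))
      ((Complex.conjCLE.toContinuousLinearMap).comp F) p :=
    Complex.conjCLE.toContinuousLinearMap.hasFDerivAt.comp p
      ((hsm.contDiffAt (hU.mem_nhds hp)).differentiableAt (by simp)).hasFDerivAt
  -- derivatives of the Wirtinger derivative functions
  have hwxb : HasFDerivAt (wdxbar lam)
      ((1/2 : ℂ) • ((ContinuousLinearMap.apply ℝ ℂ ((1:ℂ),(0:ℂ))).comp D2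
        + I • (ContinuousLinearMap.apply ℝ ℂ (I,(0:ℂ))).comp D2)) p :=
    ((happ (1,0)).add ((happ (I,0)).const_mul I)).const_mul (1/2 : ℂ)
  have hwy : HasFDerivAt (wdy lam)
      ((1/2 : ℂ) • ((ContinuousLinearMap.apply ℝ ℂ ((0:ℂ),(1:ℂ))).comp D2
        - I • (ContinuousLinearMap.apply ℝ ℂ ((0:ℂ),I)).comp D2)) p :=
    ((happ (0,1)).sub ((happ (0,I)).const_mul I)).const_mul (1/2 : ℂ)
  have hwyb : HasFDerivAt (wdybar lam)
      ((1/2 : ℂ) • ((ContinuousLinearMap.apply ℝ ℂ ((0:ℂ),(1:ℂ))).comp D2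
        + I • (ContinuousLinearMap.apply ℝ ℂ ((0:ℂ),I)).comp D2)) p :=
    ((happ (0,1)).add ((happ (0,I)).const_mul I)).const_mul (1/2 : ℂ)
  -- derivative of the integrability expression
  have hG : HasFDerivAt (fun q => wdxbar lam q + conj (lam q) * wdybar lam q)
      (((1/2 : ℂ) • ((ContinuousLinearMap.apply ℝ ℂ ((1:ℂ),(0:ℂ))).comp D2
        + I • (ContinuousLinearMap.apply ℝ ℂ (I,(0:ℂ))).comp D2))
       + (conj (lam p) • ((1/2 : ℂ) • ((ContinuousLinearMap.apply ℝ ℂ ((0:ℂ),(1:ℂ))).comp D2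
        + I • (ContinuousLinearMap.apply ℝ ℂ ((0:ℂ),I)).comp D2))
          + wdybar lam p • ((Complex.conjCLE.toContinuousLinearMap).comp F))) p :=
    hwxb.add (hconj.mul hwyb)
  have hG0 : HasFDerivAt (fun q => wdxbar lam q + conj (lam q) * wdybar lam q)
      (0 : (ℂ × ℂ) →L[ℝ] ℂ) p := by
    apply (hasFDerivAt_const (0:ℂ) p).congr_of_eventuallyEq
    filter_upwards [hU.mem_nhds hp] with q hq
    exact hint q hq
  have hGeq := hG.unique hG0
  have hE1 := congrArg (fun L : (ℂ × ℂ) →L[ℝ] ℂ => L ((0:ℂ),(1:ℂ))) hGeq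
  have hE2 := congrArg (fun L : (ℂ × ℂ) →L[ℝ] ℂ => L ((0:ℂ),I)) hGeq
  simp only [ContinuousLinearMap.add_apply, ContinuousLinearMap.smul_apply,
    ContinuousLinearMap.comp_apply, ContinuousLinearMap.apply_apply,
    ContinuousLinearMap.zero_apply, smul_eq_mul, ContinuousLinearEquiv.coe_coe,
    Complex.conjCLE_apply] at hE1 hE2
  -- derivatives of a and b
  have haf : a = wdy lam := funext ha
  have hbf : b = wdybar lam := funext hb
  have hfa : fderiv ℝ a p = ((1/2 : ℂ) • ((ContinuousLinearMap.apply ℝ ℂ ((0:ℂ),(1:ℂ))).comp D2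
        - I • (ContinuousLinearMap.apply ℝ ℂ ((0:ℂ),I)).comp D2)) := by
    rw [haf]; exact hwy.fderiv
  have hfb : fderiv ℝ b p = ((1/2 : ℂ) • ((ContinuousLinearMap.apply ℝ ℂ ((0:ℂ),(1:ℂ))).comp D2
        + I • (ContinuousLinearMap.apply ℝ ℂ ((0:ℂ),I)).comp D2)) := by
    rw [hbf]; exact hwyb.fderiv
  simp only [dFbar, wdxbar, wdybar, hfa, hfb, ha p, hb p, wdy,
    ContinuousLinearMap.add_apply, ContinuousLinearMap.smul_apply,
    ContinuousLinearMap.comp_apply, ContinuousLinearMap.apply_apply,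
    ContinuousLinearMap.sub_apply, smul_eq_mul, ← hFdef]
  rw [hsymm ((0:ℂ),(1:ℂ)) ((1:ℂ),(0:ℂ)), hsymm ((0:ℂ),(1:ℂ)) (I,(0:ℂ))] at hE1
  rw [hsymm ((0:ℂ),I) ((1:ℂ),(0:ℂ)), hsymm ((0:ℂ),I) (I,(0:ℂ)),
    hsymm ((0:ℂ),I) ((0:ℂ),(1:ℂ))] at hE2
  rw [hsymm ((0:ℂ),I) ((0:ℂ),(1:ℂ))]
  have hwb : wdybar lam p = 1/2 * (F ((0:ℂ),(1:ℂ)) + I * F ((0:ℂ),I)) := rfl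
  simp only [hwb, map_mul, map_add, map_sub, Complex.conj_I, map_div₀, map_one,
    map_ofNat] at hE1 hE2 ⊢
  constructor
  · linear_combination (1/2 : ℂ) * hE1 - (I/2) * hE2
  · linear_combination (1/2 : ℂ) * hE1 + (I/2) * hE2
end

section
/- Let U ⊆ ℂ² be open, λ : U → ℂ smooth satisfying the integrability equation ∂λ/∂x̄ + conj(λ)·∂λ/∂ȳ = 0, and suppose λ(x,0) = 0 for all x with (x,0) ∈ U (so the curve {y = 0} is a leaf). Let Ω ⊆ ℂ be open with Ω × {0} ⊆ U, set b(x) := (∂λ/∂ȳ)(x,0), and suppose b(x) ≠ 0 for all x ∈ Ω. Then on Ω one has the Liouville-type equation ∂/∂x ∂/∂x̄ (log|b|) = |b|², i.e. the Gaussian curvature of the metric |b(x)|²·|dx|² on the leaf {y=0} is identically −4. -/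
open Complex ComplexConjugate

/-- Wirtinger derivative `∂g/∂x` of `g : ℂ → ℂ`, via the real Fréchet derivative. -/
noncomputable def wd1 (g : ℂ → ℂ) (x : ℂ) : ℂ :=
  (1 / 2 : ℂ) * (fderiv ℝ g x 1 - Complex.I * fderiv ℝ g x Complex.I)

/-- Wirtinger derivative `∂g/∂x̄` of `g : ℂ → ℂ`. -/
noncomputable def wd1bar (g : ℂ → ℂ) (x : ℂ) : ℂ :=
  (1 / 2 : ℂ) * (fderiv ℝ g x 1 + Complex.I * fderiv ℝ g x Complex.I)

section WirtingerAux

variable {f g : ℂ → ℂ} {x : ℂ}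

theorem wd1_congr (h : f =ᶠ[nhds x] g) : wd1 f x = wd1 g x := by
  unfold wd1; rw [h.fderiv_eq]

theorem wd1bar_congr (h : f =ᶠ[nhds x] g) : wd1bar f x = wd1bar g x := by
  unfold wd1bar; rw [h.fderiv_eq]

theorem wd1_add (hf : DifferentiableAt ℝ f x) (hg : DifferentiableAt ℝ g x) :
    wd1 (fun z => f z + g z) x = wd1 f x + wd1 g x := by
  unfold wd1; rw [fderiv_fun_add hf hg]; simp; ring

theorem wd1bar_add (hf : DifferentiableAt ℝ f x) (hg : DifferentiableAt ℝ g x) :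
    wd1bar (fun z => f z + g z) x = wd1bar f x + wd1bar g x := by
  unfold wd1bar; rw [fderiv_fun_add hf hg]; simp; ring

theorem wd1_const_mul (hf : DifferentiableAt ℝ f x) (c : ℂ) :
    wd1 (fun z => c * f z) x = c * wd1 f x := by
  unfold wd1; rw [fderiv_const_mul hf c]; simp; ring

theorem wd1bar_const_mul (hf : DifferentiableAt ℝ f x) (c : ℂ) :
    wd1bar (fun z => c * f z) x = c * wd1bar f x := by
  unfold wd1bar; rw [fderiv_const_mul hf c]; simp; ring

theorem wd1_mul (hf : DifferentiableAt ℝ f x) (hg : DifferentiableAt ℝ g x) :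
    wd1 (fun z => f z * g z) x = wd1 f x * g x + f x * wd1 g x := by
  unfold wd1; rw [fderiv_fun_mul hf hg]; simp; ring

theorem wd1bar_mul (hf : DifferentiableAt ℝ f x) (hg : DifferentiableAt ℝ g x) :
    wd1bar (fun z => f z * g z) x = wd1bar f x * g x + f x * wd1bar g x := by
  unfold wd1bar; rw [fderiv_fun_mul hf hg]; simp; ring

theorem hasFDerivAt_conj_comp (hf : DifferentiableAt ℝ f x) :
    HasFDerivAt (fun z => conj (f z))
      ((Complex.conjCLE : ℂ →L[ℝ] ℂ).comp (fderiv ℝ f x)) x :=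
  (Complex.conjCLE : ℂ →L[ℝ] ℂ).hasFDerivAt.comp x hf.hasFDerivAt

theorem diffAt_conj_comp (hf : DifferentiableAt ℝ f x) :
    DifferentiableAt ℝ (fun z => conj (f z)) x :=
  (hasFDerivAt_conj_comp hf).differentiableAt

theorem fderiv_conj_comp (hf : DifferentiableAt ℝ f x) (v : ℂ) :
    fderiv ℝ (fun z => conj (f z)) x v = conj (fderiv ℝ f x v) := by
  rw [(hasFDerivAt_conj_comp hf).fderiv]; rfl

theorem wd1_conj (hf : DifferentiableAt ℝ f x) :
    wd1 (fun z => conj (f z)) x = conj (wd1bar f x) := by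
  unfold wd1 wd1bar
  rw [fderiv_conj_comp hf 1, fderiv_conj_comp hf I]
  simp [map_add, map_mul, Complex.conj_I, map_ofNat]
  ring

theorem wd1bar_conj (hf : DifferentiableAt ℝ f x) :
    wd1bar (fun z => conj (f z)) x = conj (wd1 f x) := by
  unfold wd1 wd1bar
  rw [fderiv_conj_comp hf 1, fderiv_conj_comp hf I]
  simp [map_add, map_mul, Complex.conj_I, map_ofNat]

theorem hasFDerivAt_comp_holo {h : ℂ → ℂ} {h' : ℂ} (hf : DifferentiableAt ℝ f x)
    (hh : HasDerivAt h h' (f x)) :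
    HasFDerivAt (fun z => h (f z))
      (((ContinuousLinearMap.smulRight (1 : ℂ →L[ℂ] ℂ) h').restrictScalars ℝ).comp
        (fderiv ℝ f x)) x :=
  (hh.hasFDerivAt.restrictScalars ℝ).comp x hf.hasFDerivAt

theorem fderiv_comp_holo {h : ℂ → ℂ} {h' : ℂ} (hf : DifferentiableAt ℝ f x)
    (hh : HasDerivAt h h' (f x)) (v : ℂ) :
    fderiv ℝ (fun z => h (f z)) x v = h' * fderiv ℝ f x v := by
  rw [(hasFDerivAt_comp_holo hf hh).fderiv]
  simp [mul_comm]

theorem wd1_comp_holo {h : ℂ → ℂ} {h' : ℂ} (hf : DifferentiableAt ℝ f x)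
    (hh : HasDerivAt h h' (f x)) :
    wd1 (fun z => h (f z)) x = h' * wd1 f x := by
  unfold wd1; rw [fderiv_comp_holo hf hh 1, fderiv_comp_holo hf hh I]; ring

theorem wd1bar_comp_holo {h : ℂ → ℂ} {h' : ℂ} (hf : DifferentiableAt ℝ f x)
    (hh : HasDerivAt h h' (f x)) :
    wd1bar (fun z => h (f z)) x = h' * wd1bar f x := by
  unfold wd1bar; rw [fderiv_comp_holo hf hh 1, fderiv_comp_holo hf hh I]; ring

theorem fderiv_fderiv_apply {E : Type*} [NormedAddCommGroup E] [NormedSpace ℝ E]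
    {f : E → ℂ} {x : E} (hf : DifferentiableAt ℝ (fderiv ℝ f) x) (v w : E) :
    fderiv ℝ (fun z => fderiv ℝ f z v) x w = fderiv ℝ (fderiv ℝ f) x w v := by
  have H : HasFDerivAt (fun z => fderiv ℝ f z v)
      ((ContinuousLinearMap.apply ℝ ℂ v).comp (fderiv ℝ (fderiv ℝ f) x)) x :=
    (ContinuousLinearMap.apply ℝ ℂ v).hasFDerivAt.comp x hf.hasFDerivAt
  rw [H.fderiv]; rfl

theorem wd_comm (hf : ∀ᶠ y in nhds x, DifferentiableAt ℝ f y)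
    (hf' : DifferentiableAt ℝ (fderiv ℝ f) x) :
    wd1bar (fun z => wd1 f z) x = wd1 (fun z => wd1bar f z) x := by
  have hsymm : ∀ v w : ℂ, fderiv ℝ (fderiv ℝ f) x v w = fderiv ℝ (fderiv ℝ f) x w v :=
    second_derivative_symmetric_of_eventually
      (hf.mono fun y hy => hy.hasFDerivAt) hf'.hasFDerivAt
  have d1 : DifferentiableAt ℝ (fun z => fderiv ℝ f z (1 : ℂ)) x :=
    ((ContinuousLinearMap.apply ℝ ℂ (1:ℂ)).hasFDerivAt.comp x hf'.hasFDerivAt).differentiableAt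
  have dI : DifferentiableAt ℝ (fun z => fderiv ℝ f z Complex.I) x :=
    ((ContinuousLinearMap.apply ℝ ℂ Complex.I).hasFDerivAt.comp x hf'.hasFDerivAt).differentiableAt
  have e1 : ∀ w, fderiv ℝ (fun z => fderiv ℝ f z (1:ℂ)) x w = fderiv ℝ (fderiv ℝ f) x w 1 :=
    fderiv_fderiv_apply hf' 1
  have eI : ∀ w, fderiv ℝ (fun z => fderiv ℝ f z Complex.I) x w
      = fderiv ℝ (fderiv ℝ f) x w Complex.I := fderiv_fderiv_apply hf' I
  have L : wd1bar (fun z => wd1 f z) x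
      = (1/2:ℂ) * ((1/2:ℂ) * (fderiv ℝ (fderiv ℝ f) x 1 1 - I * fderiv ℝ (fderiv ℝ f) x 1 I)
        + I * ((1/2:ℂ) * (fderiv ℝ (fderiv ℝ f) x I 1 - I * fderiv ℝ (fderiv ℝ f) x I I))) := by
    unfold wd1bar wd1
    rw [fderiv_const_mul (a := fun z => fderiv ℝ f z 1 - I * fderiv ℝ f z I)
        (d1.sub (dI.const_mul I)) ((1:ℂ)/2),
      fderiv_fun_sub d1 (dI.const_mul I), fderiv_const_mul dI I]
    simp only [ContinuousLinearMap.smul_apply, ContinuousLinearMap.sub_apply,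
      ContinuousLinearMap.add_apply, smul_eq_mul, e1, eI]
  have R : wd1 (fun z => wd1bar f z) x
      = (1/2:ℂ) * ((1/2:ℂ) * (fderiv ℝ (fderiv ℝ f) x 1 1 + I * fderiv ℝ (fderiv ℝ f) x 1 I)
        - I * ((1/2:ℂ) * (fderiv ℝ (fderiv ℝ f) x I 1 + I * fderiv ℝ (fderiv ℝ f) x I I))) := by
    unfold wd1bar wd1
    rw [fderiv_const_mul (a := fun z => fderiv ℝ f z 1 + I * fderiv ℝ f z I)
        (d1.add (dI.const_mul I)) ((1:ℂ)/2),
      fderiv_fun_add d1 (dI.const_mul I), fderiv_const_mul dI I]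
    simp only [ContinuousLinearMap.smul_apply, ContinuousLinearMap.sub_apply,
      ContinuousLinearMap.add_apply, smul_eq_mul, e1, eI]
  rw [L, R]
  linear_combination (Complex.I/2) * (hsymm I 1)

end WirtingerAux

section Liouville1D

theorem wd1_neg {f : ℂ → ℂ} {x : ℂ} : wd1 (fun z => -f z) x = -wd1 f x := by
  unfold wd1; rw [fderiv_fun_neg]; simp; ring

theorem liouville_1d {a b : ℂ → ℂ} {Ω : Set ℂ} {x : ℂ} (hΩ : IsOpen Ω) (hx : x ∈ Ω)
    (ha : ContDiffOn ℝ (⊤ : ℕ∞) a Ω) (hbs : ContDiffOn ℝ (⊤ : ℕ∞) b Ω)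
    (hb0 : ∀ z ∈ Ω, b z ≠ 0)
    (hB : ∀ z ∈ Ω, wd1bar b z = -conj (a z) * b z)
    (hC : ∀ z ∈ Ω, wd1bar a z = -(conj (b z) * b z)) :
    wd1 (fun z => wd1bar (fun w => ((Real.log ‖b w‖ : ℝ) : ℂ)) z) x
      = b x * conj (b x) := by
  have hbdiff : ∀ z ∈ Ω, DifferentiableAt ℝ b z := fun z hz =>
    (hbs.contDiffAt (hΩ.mem_nhds hz)).differentiableAt (by simp)
  have hadiff : ∀ z ∈ Ω, DifferentiableAt ℝ a z := fun z hz =>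
    (ha.contDiffAt (hΩ.mem_nhds hz)).differentiableAt (by simp)
  have hfd : ContDiffOn ℝ (⊤ : ℕ∞) (fderiv ℝ b) Ω := hbs.fderiv_of_isOpen hΩ (by simp)
  have hA1 : ContDiffOn ℝ (⊤ : ℕ∞) (fun z => fderiv ℝ b z (1 : ℂ)) Ω :=
    (ContinuousLinearMap.apply ℝ ℂ (1 : ℂ)).contDiff.comp_contDiffOn hfd
  have hAI : ContDiffOn ℝ (⊤ : ℕ∞) (fun z => fderiv ℝ b z Complex.I) Ω :=
    (ContinuousLinearMap.apply ℝ ℂ Complex.I).contDiff.comp_contDiffOn hfd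
  have hw1b_smooth : ContDiffOn ℝ (⊤ : ℕ∞) (fun z => wd1 b z) Ω := by
    unfold wd1
    exact contDiffOn_const.mul (hA1.sub (contDiffOn_const.mul hAI))
  -- step 1: formula for ∂̄ of log |b| on Ω
  have hu : ∀ z ∈ Ω, wd1bar (fun w => ((Real.log ‖b w‖ : ℝ) : ℂ)) z
      = -(1/2 : ℂ) * conj (a z) + (1/2 : ℂ) * conj (wd1 b z * (b z)⁻¹) := by
    intro z hz
    have hbz := hb0 z hz
    have hbd := hbdiff z hz
    set c : ℂ := (‖b z‖ : ℂ) / b z with hc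
    have habsz : (‖b z‖ : ℂ) ≠ 0 := by
      simpa using hbz
    have hc0 : c ≠ 0 := div_ne_zero habsz hbz
    have hcb : c * b z = (‖b z‖ : ℂ) := by
      rw [hc]; field_simp
    have hmem : c * b z ∈ Complex.slitPlane := by
      rw [hcb]
      exact Complex.ofReal_mem_slitPlane.2 (norm_pos_iff.2 hbz)
    have habs : ‖c‖ = 1 := by
      rw [hc, norm_div]; simp [hbz]
    have hfd_cb : DifferentiableAt ℝ (fun w => c * b w) z := hbd.const_mul c
    have hlog : HasDerivAt Complex.log (c * b z)⁻¹ (c * b z) := Complex.hasDerivAt_log hmem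
    have hLd : DifferentiableAt ℝ (fun w => Complex.log (c * b w)) z :=
      (hasFDerivAt_comp_holo hfd_cb hlog).differentiableAt
    have huL : (fun w => ((Real.log ‖b w‖ : ℝ) : ℂ))
        = fun w => (1/2 : ℂ) * (Complex.log (c * b w) + conj (Complex.log (c * b w))) := by
      funext w
      rw [Complex.add_conj, Complex.log_re, norm_mul, habs, one_mul]
      push_cast
      ring
    rw [huL, wd1bar_const_mul (f := fun w => Complex.log (c * b w) + conj (Complex.log (c * b w)))
      (hLd.add (diffAt_conj_comp hLd)),
      wd1bar_add hLd (diffAt_conj_comp hLd), wd1bar_conj hLd]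
    have hwL : wd1 (fun w => Complex.log (c * b w)) z = wd1 b z * (b z)⁻¹ := by
      rw [wd1_comp_holo hfd_cb hlog, wd1_const_mul hbd c]
      field_simp
    have hwLbar : wd1bar (fun w => Complex.log (c * b w)) z = -conj (a z) := by
      rw [wd1bar_comp_holo hfd_cb hlog, wd1bar_const_mul hbd c, hB z hz]
      field_simp
    rw [hwL, hwLbar]
    ring
  -- step 2: replace inner function near x and differentiate
  have hEq : (fun z => wd1bar (fun w => ((Real.log ‖b w‖ : ℝ) : ℂ)) z)
      =ᶠ[nhds x] (fun z => -(1/2 : ℂ) * conj (a z)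
        + (1/2 : ℂ) * conj (wd1 b z * (b z)⁻¹)) := by
    filter_upwards [hΩ.mem_nhds hx] with z hz using hu z hz
  rw [wd1_congr hEq]
  have hbx := hb0 x hx
  have had := hadiff x hx
  have hbd := hbdiff x hx
  have hw1bd : DifferentiableAt ℝ (fun z => wd1 b z) x :=
    (hw1b_smooth.contDiffAt (hΩ.mem_nhds hx)).differentiableAt (by simp)
  have hbinv : DifferentiableAt ℝ (fun z => (b z)⁻¹) x :=
    (hasFDerivAt_comp_holo hbd (hasDerivAt_inv hbx)).differentiableAt
  have hconj_a : DifferentiableAt ℝ (fun z => conj (a z)) x := diffAt_conj_comp had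
  have hφ : DifferentiableAt ℝ (fun z => wd1 b z * (b z)⁻¹) x := hw1bd.mul hbinv
  rw [wd1_add (hconj_a.const_mul _) ((diffAt_conj_comp hφ).const_mul _),
    wd1_const_mul hconj_a, wd1_const_mul (diffAt_conj_comp hφ),
    wd1_conj had, wd1_conj hφ]
  -- compute wd1bar of wd1 b * b⁻¹ at x
  have hbarmul : wd1bar (fun z => wd1 b z * (b z)⁻¹) x
      = wd1bar (fun z => wd1 b z) x * (b x)⁻¹
        + wd1 b x * wd1bar (fun z => (b z)⁻¹) x := wd1bar_mul hw1bd hbinv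
  have hbarinv : wd1bar (fun z => (b z)⁻¹) x = -((b x)^2)⁻¹ * wd1bar b x :=
    wd1bar_comp_holo hbd (hasDerivAt_inv hbx)
  have hcomm : wd1bar (fun z => wd1 b z) x = wd1 (fun z => wd1bar b z) x := by
    apply wd_comm
    · filter_upwards [hΩ.mem_nhds hx] with z hz using hbdiff z hz
    · exact (hfd.contDiffAt (hΩ.mem_nhds hx)).differentiableAt (by simp)
  have hcongr2 : wd1 (fun z => wd1bar b z) x = wd1 (fun z => -conj (a z) * b z) x :=
    wd1_congr (by filter_upwards [hΩ.mem_nhds hx] with z hz using hB z hz)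
  have hmul2 : wd1 (fun z => -conj (a z) * b z) x
      = wd1 (fun z => -conj (a z)) x * b x + (-conj (a x)) * wd1 b x :=
    wd1_mul hconj_a.neg hbd
  have hneg2 : wd1 (fun z => -conj (a z)) x = -wd1 (fun z => conj (a z)) x := wd1_neg
  have hbarwd1b : wd1bar (fun z => wd1 b z) x
      = conj (b x) * b x * b x - conj (a x) * wd1 b x := by
    rw [hcomm, hcongr2, hmul2, hneg2, wd1_conj had, hC x hx]
    simp [map_mul, Complex.conj_conj]
    ring
  rw [hbarmul, hbarwd1b, hbarinv, hB x hx, hC x hx]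
  simp only [map_add, map_mul, map_neg, map_sub, map_inv₀, map_pow, Complex.conj_conj]
  have hcbx : (starRingEnd ℂ) (b x) ≠ 0 := (map_ne_zero (starRingEnd ℂ)).mpr hbx
  field_simp
  ring

end Liouville1D

set_option maxHeartbeats 1000000 in
/-- If `λ` is a smooth slope satisfying the integrability equation, `{y = 0}` is a leaf
(`λ(x,0) = 0`), and `b(x) = (∂λ/∂ȳ)(x,0)` does not vanish on an open `Ω ⊆ ℂ` with
`Ω × {0} ⊆ U`, then `log|b|` satisfies the Liouville equation `∂∂̄ log|b| = |b|²`,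
i.e. the metric `|b|²|dx|²` on the leaf has Gaussian curvature −4. -/
theorem stmt9 (U : Set (ℂ × ℂ)) (hU : IsOpen U)
    (lam : ℂ × ℂ → ℂ)
    (hsm : ContDiffOn ℝ (⊤ : ℕ∞) lam U)
    (hint : ∀ p ∈ U, wdxbar lam p + conj (lam p) * wdybar lam p = 0)
    (hleaf : ∀ x : ℂ, (x, (0 : ℂ)) ∈ U → lam (x, 0) = 0)
    (Ω : Set ℂ) (hΩ : IsOpen Ω) (hΩU : ∀ x ∈ Ω, (x, (0 : ℂ)) ∈ U)
    (b : ℂ → ℂ) (hb : ∀ x : ℂ, b x = wdybar lam (x, 0))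
    (hb0 : ∀ x ∈ Ω, b x ≠ 0) :
    ∀ x ∈ Ω,
      wd1 (fun z => wd1bar (fun w => ((Real.log ‖b w‖ : ℝ) : ℂ)) z) x
        = ((‖b x‖ : ℝ) : ℂ) ^ 2 := by
  intro x hx
  set V : Set ℂ := {t : ℂ | (t, (0 : ℂ)) ∈ U} with hV
  have hVopen : IsOpen V := hU.preimage (continuous_id.prodMk continuous_const)
  have hΩV : Ω ⊆ V := fun t ht => hΩU t ht
  have hlam1 : ContDiffOn ℝ (⊤ : ℕ∞) (fderiv ℝ lam) U := hsm.fderiv_of_isOpen hU (by simp)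
  have hdiffU : ∀ p ∈ U, DifferentiableAt ℝ lam p := fun p hp =>
    (hsm.contDiffAt (hU.mem_nhds hp)).differentiableAt (by simp)
  have hdiffU' : ∀ p ∈ U, DifferentiableAt ℝ (fderiv ℝ lam) p := fun p hp =>
    (hlam1.contDiffAt (hU.mem_nhds hp)).differentiableAt (by simp)
  set a : ℂ → ℂ := fun t => (1/2 : ℂ) * (fderiv ℝ lam (t, 0) (0, 1)
    - Complex.I * fderiv ℝ lam (t, 0) (0, Complex.I)) with ha_def
  have hbfun : b = fun t => (1/2 : ℂ) * (fderiv ℝ lam (t, 0) (0, 1)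
      + Complex.I * fderiv ℝ lam (t, 0) (0, Complex.I)) := by
    funext t; rw [hb t]; rfl
  -- the key identity obtained by differentiating the integrability equation
  have key : ∀ t ∈ V, ∀ v : ℂ × ℂ,
      (1/2 : ℂ) * (fderiv ℝ (fderiv ℝ lam) (t, 0) v (1, 0)
        + Complex.I * fderiv ℝ (fderiv ℝ lam) (t, 0) v (Complex.I, 0))
      = -conj (fderiv ℝ lam (t, 0) v) * b t := by
    intro t ht v
    have hp : ((t, (0 : ℂ)) : ℂ × ℂ) ∈ U := ht
    have hD := hdiffU _ hp
    have hD2 := hdiffU' _ hp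
    have h10 : HasFDerivAt (fun p : ℂ × ℂ => fderiv ℝ lam p ((1 : ℂ), (0 : ℂ)))
        ((ContinuousLinearMap.apply ℝ ℂ ((1 : ℂ), (0 : ℂ))).comp
          (fderiv ℝ (fderiv ℝ lam) (t, 0))) (t, 0) :=
      (ContinuousLinearMap.apply ℝ ℂ ((1 : ℂ), (0 : ℂ))).hasFDerivAt.comp _ hD2.hasFDerivAt
    have hI0 : HasFDerivAt (fun p : ℂ × ℂ => fderiv ℝ lam p (Complex.I, (0 : ℂ)))
        ((ContinuousLinearMap.apply ℝ ℂ (Complex.I, (0 : ℂ))).comp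
          (fderiv ℝ (fderiv ℝ lam) (t, 0))) (t, 0) :=
      (ContinuousLinearMap.apply ℝ ℂ (Complex.I, (0 : ℂ))).hasFDerivAt.comp _ hD2.hasFDerivAt
    have h01 : HasFDerivAt (fun p : ℂ × ℂ => fderiv ℝ lam p ((0 : ℂ), (1 : ℂ)))
        ((ContinuousLinearMap.apply ℝ ℂ ((0 : ℂ), (1 : ℂ))).comp
          (fderiv ℝ (fderiv ℝ lam) (t, 0))) (t, 0) :=
      (ContinuousLinearMap.apply ℝ ℂ ((0 : ℂ), (1 : ℂ))).hasFDerivAt.comp _ hD2.hasFDerivAt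
    have h0I : HasFDerivAt (fun p : ℂ × ℂ => fderiv ℝ lam p ((0 : ℂ), Complex.I))
        ((ContinuousLinearMap.apply ℝ ℂ ((0 : ℂ), Complex.I)).comp
          (fderiv ℝ (fderiv ℝ lam) (t, 0))) (t, 0) :=
      (ContinuousLinearMap.apply ℝ ℂ ((0 : ℂ), Complex.I)).hasFDerivAt.comp _ hD2.hasFDerivAt
    have hconj : HasFDerivAt (fun p : ℂ × ℂ => conj (lam p))
        ((Complex.conjCLE : ℂ →L[ℝ] ℂ).comp (fderiv ℝ lam (t, 0))) (t, 0) :=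
      (Complex.conjCLE : ℂ →L[ℝ] ℂ).hasFDerivAt.comp _ hD.hasFDerivAt
    have h1 := (h10.add (hI0.const_mul Complex.I)).const_mul ((1 : ℂ)/2)
    have h2 := (h01.add (h0I.const_mul Complex.I)).const_mul ((1 : ℂ)/2)
    have hFder : HasFDerivAt (fun p => wdxbar lam p + conj (lam p) * wdybar lam p)
        ((((1 : ℂ)/2) • (((ContinuousLinearMap.apply ℝ ℂ ((1 : ℂ), (0 : ℂ))).comp
            (fderiv ℝ (fderiv ℝ lam) (t, 0)))
          + Complex.I • ((ContinuousLinearMap.apply ℝ ℂ (Complex.I, (0 : ℂ))).comp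
            (fderiv ℝ (fderiv ℝ lam) (t, 0)))))
        + (conj (lam (t, 0)) • (((1 : ℂ)/2) •
            (((ContinuousLinearMap.apply ℝ ℂ ((0 : ℂ), (1 : ℂ))).comp
              (fderiv ℝ (fderiv ℝ lam) (t, 0)))
            + Complex.I • ((ContinuousLinearMap.apply ℝ ℂ ((0 : ℂ), Complex.I)).comp
              (fderiv ℝ (fderiv ℝ lam) (t, 0)))))
          + ((1 : ℂ)/2 * (fderiv ℝ lam (t, 0) (0, 1)
              + Complex.I * fderiv ℝ lam (t, 0) (0, Complex.I))) •
            ((Complex.conjCLE : ℂ →L[ℝ] ℂ).comp (fderiv ℝ lam (t, 0))))) (t, 0) :=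
      h1.add (hconj.mul h2)
    have hzero : (fun p => wdxbar lam p + conj (lam p) * wdybar lam p)
        =ᶠ[nhds ((t, (0 : ℂ)) : ℂ × ℂ)] (fun _ => (0 : ℂ)) := by
      filter_upwards [hU.mem_nhds hp] with q hq using hint q hq
    have h0 : fderiv ℝ (fun p => wdxbar lam p + conj (lam p) * wdybar lam p)
        ((t, (0 : ℂ)) : ℂ × ℂ) = 0 := by
      rw [hzero.fderiv_eq]; exact fderiv_const_apply 0
    have hBig := hFder.fderiv
    rw [h0] at hBig
    have hv := congrArg (fun (L : (ℂ × ℂ) →L[ℝ] ℂ) => L v) hBig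
    simp only [ContinuousLinearMap.zero_apply, ContinuousLinearMap.add_apply,
      ContinuousLinearMap.smul_apply, ContinuousLinearMap.comp_apply,
      ContinuousLinearMap.apply_apply, smul_eq_mul, ContinuousLinearEquiv.coe_coe, Complex.conjCLE_apply,
      hleaf t ht, map_zero, zero_mul] at hv
    rw [hb t]
    unfold wdybar
    linear_combination -hv
  have hsymm : ∀ t ∈ V, ∀ v w : ℂ × ℂ,
      fderiv ℝ (fderiv ℝ lam) (t, 0) v w = fderiv ℝ (fderiv ℝ lam) (t, 0) w v := by
    intro t ht v w
    apply second_derivative_symmetric_of_eventually (f := lam) (f' := fderiv ℝ lam)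
    · filter_upwards [hU.mem_nhds ht] with q hq using (hdiffU q hq).hasFDerivAt
    · exact (hdiffU' _ ht).hasFDerivAt
  -- derivatives of b and a along the leaf
  have hΦder : ∀ t ∈ V, HasFDerivAt (fun s : ℂ => fderiv ℝ lam (s, 0))
      ((fderiv ℝ (fderiv ℝ lam) (t, 0)).comp (ContinuousLinearMap.inl ℝ ℂ ℂ)) t := by
    intro t ht
    exact ((hdiffU' _ ht).hasFDerivAt).comp t (ContinuousLinearMap.inl ℝ ℂ ℂ).hasFDerivAt
  have hbder : ∀ t ∈ V, ∀ w : ℂ, fderiv ℝ b t w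
      = (1/2 : ℂ) * (fderiv ℝ (fderiv ℝ lam) (t, 0) (w, 0) (0, 1)
        + Complex.I * fderiv ℝ (fderiv ℝ lam) (t, 0) (w, 0) (0, Complex.I)) := by
    intro t ht w
    have h1 : HasFDerivAt (fun s : ℂ => fderiv ℝ lam (s, 0) ((0 : ℂ), (1 : ℂ)))
        ((ContinuousLinearMap.apply ℝ ℂ ((0 : ℂ), (1 : ℂ))).comp
          ((fderiv ℝ (fderiv ℝ lam) (t, 0)).comp (ContinuousLinearMap.inl ℝ ℂ ℂ))) t :=
      (ContinuousLinearMap.apply ℝ ℂ ((0 : ℂ), (1 : ℂ))).hasFDerivAt.comp t (hΦder t ht)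
    have h2 : HasFDerivAt (fun s : ℂ => fderiv ℝ lam (s, 0) ((0 : ℂ), Complex.I))
        ((ContinuousLinearMap.apply ℝ ℂ ((0 : ℂ), Complex.I)).comp
          ((fderiv ℝ (fderiv ℝ lam) (t, 0)).comp (ContinuousLinearMap.inl ℝ ℂ ℂ))) t :=
      (ContinuousLinearMap.apply ℝ ℂ ((0 : ℂ), Complex.I)).hasFDerivAt.comp t (hΦder t ht)
    have hb2 : HasFDerivAt b (((1 : ℂ)/2) •
        (((ContinuousLinearMap.apply ℝ ℂ ((0 : ℂ), (1 : ℂ))).comp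
          ((fderiv ℝ (fderiv ℝ lam) (t, 0)).comp (ContinuousLinearMap.inl ℝ ℂ ℂ)))
        + Complex.I • ((ContinuousLinearMap.apply ℝ ℂ ((0 : ℂ), Complex.I)).comp
          ((fderiv ℝ (fderiv ℝ lam) (t, 0)).comp (ContinuousLinearMap.inl ℝ ℂ ℂ))))) t := by
      rw [hbfun]
      exact (h1.add (h2.const_mul Complex.I)).const_mul ((1 : ℂ)/2)
    rw [hb2.fderiv]
    simp only [ContinuousLinearMap.smul_apply, ContinuousLinearMap.add_apply,
      ContinuousLinearMap.comp_apply, ContinuousLinearMap.apply_apply,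
      ContinuousLinearMap.inl_apply, smul_eq_mul]
  have hader : ∀ t ∈ V, ∀ w : ℂ, fderiv ℝ a t w
      = (1/2 : ℂ) * (fderiv ℝ (fderiv ℝ lam) (t, 0) (w, 0) (0, 1)
        - Complex.I * fderiv ℝ (fderiv ℝ lam) (t, 0) (w, 0) (0, Complex.I)) := by
    intro t ht w
    have h1 : HasFDerivAt (fun s : ℂ => fderiv ℝ lam (s, 0) ((0 : ℂ), (1 : ℂ)))
        ((ContinuousLinearMap.apply ℝ ℂ ((0 : ℂ), (1 : ℂ))).comp
          ((fderiv ℝ (fderiv ℝ lam) (t, 0)).comp (ContinuousLinearMap.inl ℝ ℂ ℂ))) t :=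
      (ContinuousLinearMap.apply ℝ ℂ ((0 : ℂ), (1 : ℂ))).hasFDerivAt.comp t (hΦder t ht)
    have h2 : HasFDerivAt (fun s : ℂ => fderiv ℝ lam (s, 0) ((0 : ℂ), Complex.I))
        ((ContinuousLinearMap.apply ℝ ℂ ((0 : ℂ), Complex.I)).comp
          ((fderiv ℝ (fderiv ℝ lam) (t, 0)).comp (ContinuousLinearMap.inl ℝ ℂ ℂ))) t :=
      (ContinuousLinearMap.apply ℝ ℂ ((0 : ℂ), Complex.I)).hasFDerivAt.comp t (hΦder t ht)
    have ha2 : HasFDerivAt a (((1 : ℂ)/2) •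
        (((ContinuousLinearMap.apply ℝ ℂ ((0 : ℂ), (1 : ℂ))).comp
          ((fderiv ℝ (fderiv ℝ lam) (t, 0)).comp (ContinuousLinearMap.inl ℝ ℂ ℂ)))
        - Complex.I • ((ContinuousLinearMap.apply ℝ ℂ ((0 : ℂ), Complex.I)).comp
          ((fderiv ℝ (fderiv ℝ lam) (t, 0)).comp (ContinuousLinearMap.inl ℝ ℂ ℂ))))) t := by
      rw [ha_def]
      exact (h1.sub (h2.const_mul Complex.I)).const_mul ((1 : ℂ)/2)
    rw [ha2.fderiv]
    simp only [ContinuousLinearMap.smul_apply, ContinuousLinearMap.sub_apply,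
      ContinuousLinearMap.comp_apply, ContinuousLinearMap.apply_apply,
      ContinuousLinearMap.inl_apply, smul_eq_mul]
  -- the two structure equations on V
  have hBV : ∀ t ∈ V, wd1bar b t = -conj (a t) * b t := by
    intro t ht
    have k1 := key t ht ((0 : ℂ), (1 : ℂ))
    have kI := key t ht ((0 : ℂ), Complex.I)
    have e1 := hbder t ht 1
    have eI := hbder t ht Complex.I
    rw [hsymm t ht ((1 : ℂ), 0) ((0 : ℂ), 1), hsymm t ht ((1 : ℂ), 0) ((0 : ℂ), Complex.I)] at e1
    rw [hsymm t ht (Complex.I, (0 : ℂ)) ((0 : ℂ), 1),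
      hsymm t ht (Complex.I, (0 : ℂ)) ((0 : ℂ), Complex.I)] at eI
    have hconj_a_t : conj (a t) = (1/2 : ℂ) * (conj (fderiv ℝ lam (t, 0) (0, 1))
        + Complex.I * conj (fderiv ℝ lam (t, 0) (0, Complex.I))) := by
      rw [ha_def]
      simp only [map_mul, map_sub, map_div₀, map_one, map_ofNat, Complex.conj_I]
      ring
    unfold wd1bar
    rw [e1, eI, hconj_a_t]
    linear_combination (1/2 : ℂ) * k1 + (Complex.I/2) * kI
  have hCV : ∀ t ∈ V, wd1bar a t = -(conj (b t) * b t) := by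
    intro t ht
    have k1 := key t ht ((0 : ℂ), (1 : ℂ))
    have kI := key t ht ((0 : ℂ), Complex.I)
    have e1 := hader t ht 1
    have eI := hader t ht Complex.I
    rw [hsymm t ht ((1 : ℂ), 0) ((0 : ℂ), 1), hsymm t ht ((1 : ℂ), 0) ((0 : ℂ), Complex.I)] at e1
    rw [hsymm t ht (Complex.I, (0 : ℂ)) ((0 : ℂ), 1),
      hsymm t ht (Complex.I, (0 : ℂ)) ((0 : ℂ), Complex.I)] at eI
    have hconj_b_t : conj (b t) = (1/2 : ℂ) * (conj (fderiv ℝ lam (t, 0) (0, 1))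
        - Complex.I * conj (fderiv ℝ lam (t, 0) (0, Complex.I))) := by
      rw [hbfun]
      simp only [map_mul, map_add, map_div₀, map_one, map_ofNat, Complex.conj_I]
      ring
    unfold wd1bar
    rw [e1, eI, hconj_b_t]
    linear_combination (1/2 : ℂ) * k1 - (Complex.I/2) * kI
  -- smoothness of a and b on V
  have hΦs : ContDiffOn ℝ (⊤ : ℕ∞) (fun t : ℂ => fderiv ℝ lam (t, 0)) V := by
    apply hlam1.comp (f := fun t : ℂ => ((t, (0 : ℂ)) : ℂ × ℂ))
    · exact (contDiff_id.prodMk contDiff_const).contDiffOn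
    · intro t ht; exact ht
  have hbsmooth : ContDiffOn ℝ (⊤ : ℕ∞) b V := by
    rw [hbfun]
    exact contDiffOn_const.mul
      (((ContinuousLinearMap.apply ℝ ℂ ((0 : ℂ), (1 : ℂ))).contDiff.comp_contDiffOn hΦs).add
        (contDiffOn_const.mul
          ((ContinuousLinearMap.apply ℝ ℂ ((0 : ℂ), Complex.I)).contDiff.comp_contDiffOn hΦs)))
  have hasmooth : ContDiffOn ℝ (⊤ : ℕ∞) a V := by
    rw [ha_def]
    exact contDiffOn_const.mul
      (((ContinuousLinearMap.apply ℝ ℂ ((0 : ℂ), (1 : ℂ))).contDiff.comp_contDiffOn hΦs).sub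
        (contDiffOn_const.mul
          ((ContinuousLinearMap.apply ℝ ℂ ((0 : ℂ), Complex.I)).contDiff.comp_contDiffOn hΦs)))
  -- conclude by the one-dimensional Liouville computation
  have hfinal := liouville_1d (a := a) (b := b) hΩ hx (hasmooth.mono hΩV) (hbsmooth.mono hΩV)
    hb0 (fun z hz => hBV z (hΩV hz)) (fun z hz => hCV z (hΩV hz))
  rw [hfinal, Complex.mul_conj, ← Complex.sq_norm, Complex.ofReal_pow]
end

section
/- Let λ, μ be real numbers with λ > 1 > μ > 0, and let p, q be coprime positive integers with λ^p·μ^q = 1. Let f : ℝ² → ℝ be real-analytic in a neighborhood of the origin with f(λ·x, μ·y) = f(x,y) for all (x,y) in a neighborhood of (0,0). Then there exists a function g : ℝ → ℝ, real-analytic in a neighborhood of 0, such that f(x,y) = g(x^p · y^q) for all (x,y) in a neighborhood of (0,0). (In the resonant case, every real-analytic first integral of (x,y) ↦ (λx, μy) is a function of x^p y^q.) -/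
/-!
Write `f = ∑ Pₙ` with `Pₙ(x, y) = ∑ⱼ bₙⱼ xʲ yⁿ⁻ʲ` homogeneous of degree `n`. By uniqueness of
power series, invariance of `f` passes to each `Pₙ`, so `bₙⱼ ≠ 0` forces `λʲ μⁿ⁻ʲ = 1`. Taking
logarithms against `λᵖ μ^q = 1` gives `j q = (n - j) p`, and coprimality gives `j = N p`,
`n - j = N q`. Hence `P_{N(p+q)} = c_N (xᵖ y^q)^N` and all other `Pₙ` vanish, so `f = g(xᵖ y^q)`
with `g = ∑ c_N tᴺ`, whose radius is positive because `|c_N| ≤ ‖P_{N(p+q)}‖`.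
-/

open Filter Finset FormalMultilinearSeries

theorem Nat.Coprime.exists_eq_mul_of_mul_eq_mul {p q j k : ℕ} (hpq : p.Coprime q)
    (h : j * q = k * p) : ∃ N, j = N * p ∧ k = N * q := by
  obtain ⟨N, rfl⟩ := hpq.dvd_of_dvd_mul_right (Dvd.intro_left k h.symm)
  rcases p.eq_zero_or_pos with rfl | hp
  · exact ⟨k, by simp, by simp_all⟩
  · exact ⟨N, mul_comm _ _, Nat.eq_of_mul_eq_mul_right hp (by linarith)⟩

theorem Nat.Coprime.add_ne_zero {p q : ℕ} (hpq : p.Coprime q) : p + q ≠ 0 := by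
  rintro h
  simp_all [Nat.add_eq_zero_iff]

namespace MultilinearMap

section CommSemiring

variable {R : Type*} [CommSemiring R] {n : ℕ}

def coeffDiag (φ : MultilinearMap R (fun _ : Fin n => R × R) R) (j : ℕ) : R :=
  ∑ s : Finset (Fin n) with s.card = j, φ (s.piecewise (fun _ => (1, 0)) (fun _ => (0, 1)))

theorem apply_diag_prod_eq_sum (φ : MultilinearMap R (fun _ : Fin n => R × R) R) (x y : R) :
    φ (fun _ => (x, y)) = ∑ j ∈ Finset.range (n + 1), φ.coeffDiag j * x ^ j * y ^ (n - j) := by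
  have hxy : (fun _ : Fin n => (x, y)) =
      (fun _ => x • ((1 : R), (0 : R))) + (fun _ => y • ((0 : R), (1 : R))) := by
    ext <;> simp
  have hterm (s : Finset (Fin n)) :
      φ (s.piecewise (fun _ => x • ((1 : R), (0 : R))) (fun _ => y • ((0 : R), (1 : R)))) =
        x ^ s.card * y ^ (n - s.card) * φ (s.piecewise (fun _ => (1, 0)) (fun _ => (0, 1))) := by
    have hsmul : s.piecewise (fun _ => x • ((1 : R), (0 : R))) (fun _ => y • ((0 : R), (1 : R))) =
        fun i => s.piecewise (fun _ => x) (fun _ => y) i •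
          s.piecewise (fun _ => ((1 : R), (0 : R))) (fun _ => (0, 1)) i := by
      ext i <;> by_cases hi : i ∈ s <;> simp [hi]
    rw [hsmul, φ.map_smul_univ, prod_piecewise, prod_const, prod_const, smul_eq_mul,
      univ_inter, ← compl_eq_univ_sdiff, card_compl, Fintype.card_fin]
  have hcard : ∀ s ∈ (univ : Finset (Finset (Fin n))), s.card ∈ Finset.range (n + 1) := fun s _ =>
    mem_range_succ_iff.mpr (by simpa using card_le_univ s)
  rw [hxy, φ.map_add_univ, ← sum_fiberwise_of_maps_to hcard]
  refine sum_congr rfl fun j _ => ?_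
  rw [coeffDiag, sum_mul, sum_mul]
  refine sum_congr rfl fun s hs => ?_
  rw [hterm, (mem_filter.mp hs).2]
  ring

end CommSemiring

section Domain

variable {R : Type*} [CommRing R] [IsDomain R] [Infinite R] {n p q : ℕ}
  {φ : MultilinearMap R (fun _ : Fin n => R × R) R} {l m : R}

open Polynomial in
theorem pow_mul_pow_eq_one_of_coeffDiag_ne_zero
    (hφ : ∀ x, φ (fun _ => (l * x, m)) = φ (fun _ => (x, 1))) {j : ℕ} (hj : j ≤ n)
    (hcoeff : φ.coeffDiag j ≠ 0) : l ^ j * m ^ (n - j) = 1 := by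
  have hpoly : ∑ i ∈ Finset.range (n + 1), C (φ.coeffDiag i * (l ^ i * m ^ (n - i))) * X ^ i =
      ∑ i ∈ Finset.range (n + 1), C (φ.coeffDiag i) * X ^ i := by
    refine Polynomial.funext fun x => ?_
    have hx := hφ x
    simp only [apply_diag_prod_eq_sum, one_pow, mul_one] at hx
    simp only [eval_finsetSum, eval_mul, eval_C, eval_pow, eval_X, ← hx]
    exact sum_congr rfl fun i _ => by ring
  have hj' := congrArg (Polynomial.coeff · j) hpoly
  simp only [Polynomial.finsetSum_coeff, Polynomial.coeff_C_mul_X_pow] at hj'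
  rw [sum_ite_eq, sum_ite_eq, if_pos (mem_range_succ_iff.mpr hj),
    if_pos (mem_range_succ_iff.mpr hj)] at hj'
  simpa [hcoeff] using hj'

theorem exists_eq_mul_of_coeffDiag_ne_zero
    (hφ : ∀ x, φ (fun _ => (l * x, m)) = φ (fun _ => (x, 1)))
    (hres : ∀ j k : ℕ, l ^ j * m ^ k = 1 → j * q = k * p) (hpq : p.Coprime q) {j : ℕ}
    (hj : j ≤ n) (hcoeff : φ.coeffDiag j ≠ 0) : ∃ N, j = N * p ∧ n - j = N * q :=
  hpq.exists_eq_mul_of_mul_eq_mul (hres _ _ (pow_mul_pow_eq_one_of_coeffDiag_ne_zero hφ hj hcoeff))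

theorem apply_diag_eq_zero_of_not_dvd
    (hφ : ∀ x, φ (fun _ => (l * x, m)) = φ (fun _ => (x, 1)))
    (hres : ∀ j k : ℕ, l ^ j * m ^ k = 1 → j * q = k * p) (hpq : p.Coprime q)
    (hn : ¬ (p + q) ∣ n) (x y : R) : φ (fun _ => (x, y)) = 0 := by
  rw [apply_diag_prod_eq_sum]
  refine sum_eq_zero fun j hj => ?_
  by_cases hcoeff : φ.coeffDiag j = 0
  · simp [hcoeff]
  obtain ⟨N, hjN, hnN⟩ :=
    exists_eq_mul_of_coeffDiag_ne_zero hφ hres hpq (mem_range_succ_iff.mp hj) hcoeff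
  refine absurd ⟨N, ?_⟩ hn
  rw [mul_comm, mul_add, ← hjN, ← hnN, Nat.add_sub_cancel' (mem_range_succ_iff.mp hj)]

theorem apply_diag_eq_of_eq_mul
    (hφ : ∀ x, φ (fun _ => (l * x, m)) = φ (fun _ => (x, 1)))
    (hres : ∀ j k : ℕ, l ^ j * m ^ k = 1 → j * q = k * p) (hpq : p.Coprime q)
    {N : ℕ} (hn : n = N * (p + q)) (x y : R) :
    φ (fun _ => (x, y)) = φ (fun _ => (1, 1)) * (x ^ p * y ^ q) ^ N := by
  have hNp : N * p ≤ n := hn ▸ Nat.mul_le_mul_left N (Nat.le_add_right p q)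
  have hNq : n - N * p = N * q := by rw [hn, mul_add, Nat.add_sub_cancel_left]
  suffices h : ∀ x y : R, φ (fun _ => (x, y)) = φ.coeffDiag (N * p) * (x ^ p * y ^ q) ^ N by
    rw [h x y, h 1 1]
    simp
  intro x y
  rw [apply_diag_prod_eq_sum, sum_eq_single_of_mem (N * p) (mem_range_succ_iff.mpr hNp), hNq,
    mul_pow, ← pow_mul, ← pow_mul, mul_assoc, mul_comm p, mul_comm q]
  intro j hj hjN
  by_cases hcoeff : φ.coeffDiag j = 0
  · simp [hcoeff]
  obtain ⟨N', hjN', hnN'⟩ :=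
    exists_eq_mul_of_coeffDiag_ne_zero hφ hres hpq (mem_range_succ_iff.mp hj) hcoeff
  have hN'N : N' * (p + q) = N * (p + q) := by
    rw [mul_add, ← hjN', ← hnN', Nat.add_sub_cancel' (mem_range_succ_iff.mp hj), hn]
  rw [Nat.eq_of_mul_eq_mul_right (Nat.pos_of_ne_zero hpq.add_ne_zero) hN'N] at hjN'
  exact absurd hjN' hjN

end Domain

end MultilinearMap

theorem mul_eq_mul_of_pow_mul_pow_eq_one {l m : ℝ} (hl : 0 < l) (hl1 : l ≠ 1) (hm : 0 < m)
    {p q j k : ℕ} (hpq : l ^ p * m ^ q = 1) (hjk : l ^ j * m ^ k = 1) : j * q = k * p := by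
  have hlog {a b : ℕ} (h : l ^ a * m ^ b = 1) : a * Real.log l + b * Real.log m = 0 := by
    simpa [Real.log_mul, Real.log_pow, hl.ne', hm.ne'] using congrArg Real.log h
  have hlogl : Real.log l ≠ 0 := Real.log_ne_zero_of_pos_of_ne_one hl hl1
  have : ((j * q : ℕ) - (k * p : ℕ) : ℝ) * Real.log l = 0 := by
    push_cast
    linear_combination (q : ℝ) * hlog hjk - (k : ℝ) * hlog hpq
  exact_mod_cast sub_eq_zero.mp ((mul_eq_zero.mp this).resolve_right hlogl)

section Analytic

variable {𝕜 E F : Type*} [NontriviallyNormedField 𝕜] [NormedAddCommGroup E] [NormedSpace 𝕜 E]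
  [NormedAddCommGroup F] [NormedSpace 𝕜 F]

theorem HasFPowerSeriesAt.apply_diag_map_eq {f : E → F} {pf : FormalMultilinearSeries 𝕜 E F}
    (hf : HasFPowerSeriesAt f pf 0) (u : E →L[𝕜] E) (hu : ∀ᶠ z in nhds 0, f (u z) = f z)
    (n : ℕ) (z : E) : pf n (fun _ => u z) = pf n (fun _ => z) := by
  have hfu : HasFPowerSeriesAt (f ∘ u) (pf.compContinuousLinearMap u) 0 :=
    HasFPowerSeriesAt.compContinuousLinearMap (by rwa [map_zero])
  have hzero := (hfu.congr hu).sub hf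
  rw [sub_self] at hzero
  simpa [sub_eq_zero, Function.comp_def] using hzero.apply_eq_zero n z

theorem FormalMultilinearSeries.radius_ofScalars_pos_of_norm_le
    (pf : FormalMultilinearSeries 𝕜 E F) (hpf : 0 < pf.radius) {c : ℕ → 𝕜} {d : ℕ}
    (hc : ∀ N, ‖c N‖ ≤ ‖pf (N * d)‖) : 0 < (ofScalars 𝕜 c).radius := by
  obtain ⟨r, hr0, hr⟩ := ENNReal.lt_iff_exists_nnreal_btwn.mp hpf
  obtain ⟨C, -, hC⟩ := pf.norm_mul_pow_le_of_lt_radius hr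
  refine lt_of_lt_of_le ?_ ((ofScalars 𝕜 c).le_radius_of_bound C (r := r ^ d) fun N => ?_)
  · have : 0 < r := by exact_mod_cast hr0
    positivity
  · calc ‖ofScalars 𝕜 c N‖ * ((r ^ d : NNReal) : ℝ) ^ N ≤ ‖pf (N * d)‖ * (r : ℝ) ^ (N * d) := by
          rw [ofScalars_norm, NNReal.coe_pow, ← pow_mul, mul_comm d]
          gcongr
          exact hc N
      _ ≤ C := hC _

end Analytic

theorem tendsto_fst_pow_mul_snd_pow_nhds_zero {p q : ℕ} (hpq : p + q ≠ 0) :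
    Tendsto (fun z : ℝ × ℝ => z.1 ^ p * z.2 ^ q) (nhds 0) (nhds 0) := by
  have hcont : Continuous (fun z : ℝ × ℝ => z.1 ^ p * z.2 ^ q) := by fun_prop
  simpa [← pow_add, zero_pow hpq] using hcont.tendsto 0

theorem stmt14_general (l m : ℝ) (hl : 1 < l) (hm0 : 0 < m)
    (p q : ℕ) (hpq : Nat.Coprime p q)
    (hres : l ^ p * m ^ q = 1)
    (f : ℝ × ℝ → ℝ) (hf : AnalyticAt ℝ f 0)
    (hinv : ∀ᶠ z : ℝ × ℝ in nhds 0, f (l * z.1, m * z.2) = f z) :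
    ∃ g : ℝ → ℝ, AnalyticAt ℝ g 0 ∧
      ∀ᶠ z : ℝ × ℝ in nhds 0, f z = g (z.1 ^ p * z.2 ^ q) := by
  obtain ⟨pf, r, hr⟩ := hf
  have hpq0 := hpq.add_ne_zero
  have hφ (n : ℕ) (x : ℝ) : pf n (fun _ => (l * x, m)) = pf n (fun _ => (x, 1)) := by
    simpa using hr.hasFPowerSeriesAt.apply_diag_map_eq
      ((l • ContinuousLinearMap.id ℝ ℝ).prodMap (m • ContinuousLinearMap.id ℝ ℝ)) hinv n (x, 1)
  have hlm (j k : ℕ) (h : l ^ j * m ^ k = 1) : j * q = k * p :=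
    mul_eq_mul_of_pow_mul_pow_eq_one (by linarith) hl.ne' hm0 hres h
  set c : ℕ → ℝ := fun N => pf (N * (p + q)) (fun _ => (1, 1))
  have hc (N : ℕ) : ‖c N‖ ≤ ‖pf (N * (p + q))‖ := by
    simpa using (pf (N * (p + q))).le_opNorm (fun _ => (1, 1))
  have hg := (ofScalars ℝ c).hasFPowerSeriesOnBall
    (pf.radius_ofScalars_pos_of_norm_le (hr.r_pos.trans_le hr.r_le) hc)
  refine ⟨(ofScalars ℝ c).sum, hg.analyticAt, ?_⟩
  filter_upwards [hr.hasFPowerSeriesAt.eventually_hasSum,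
    (tendsto_fst_pow_mul_snd_pow_nhds_zero hpq0).eventually hg.hasFPowerSeriesAt.eventually_hasSum] with z hfz hgz
  simp only [zero_add, ofScalars_apply_eq, smul_eq_mul] at hfz hgz
  refine hfz.unique ((Function.Injective.hasSum_iff (mul_left_injective₀ hpq0) ?_).mp ?_)
  · rintro n hn
    refine (pf n).toMultilinearMap.apply_diag_eq_zero_of_not_dvd (hφ n) hlm hpq ?_ z.1 z.2
    rintro ⟨N, rfl⟩
    exact hn ⟨N, mul_comm _ _⟩
  · convert hgz using 2 with N
    exact (pf _).toMultilinearMap.apply_diag_eq_of_eq_mul (hφ _) hlm hpq rfl z.1 z.2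

/-- In the resonant case, every real-analytic local first integral of the hyperbolic
diffeomorphism `(x,y) ↦ (λx, μy)` — with `λ > 1 > μ > 0`, `p, q` coprime positive
integers and `λ^p·μ^q = 1` — is a function of the monomial `x^p·y^q`: there is a
real-analytic germ `g` at `0` with `f(x,y) = g(x^p·y^q)` near the origin. -/
theorem stmt14 (l m : ℝ) (hl : 1 < l) (hm0 : 0 < m) (hm1 : m < 1)
    (p q : ℕ) (hp : 0 < p) (hq : 0 < q) (hpq : Nat.Coprime p q)
    (hres : l ^ p * m ^ q = 1)
    (f : ℝ × ℝ → ℝ) (hf : AnalyticAt ℝ f 0)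
    (hinv : ∀ᶠ z : ℝ × ℝ in nhds 0, f (l * z.1, m * z.2) = f z) :
    ∃ g : ℝ → ℝ, AnalyticAt ℝ g 0 ∧
      ∀ᶠ z : ℝ × ℝ in nhds 0, f z = g (z.1 ^ p * z.2 ^ q) :=
  stmt14_general l m hl hm0 p q hpq hres f hf hinv
end

section
/- Let λ > 1 be a real number and let f : ℝ² → ℝ be real-analytic in a neighborhood of the origin such that f(λ·x/(1+y), y/(1+y)) = f(x,y) for all (x,y) in a neighborhood of (0,0). Then f is constant in a neighborhood of (0,0). (A real-analytic local first integral of the map φ(x,y) = (λx/(1+y), y/(1+y)), which is the non-diagonalizable/unipotent case of a hyperbolic projective automorphism fixing the origin, is constant; the formal first integrals (x/y)·exp(−log(λ)/y) of this map are not real-analytic at the origin.) -/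
/-!
For `y ≤ 0` the backward orbit of `φ(x,y) = (λx/(1+y), y/(1+y))` through `(x, y)` is
`φ⁻ⁿ(x,y) = (x / (λⁿ(1 - ny)), y / (1 - ny))`: it stays in the ball of radius `‖(x,y)‖`
and tends to the origin. A continuous first integral therefore equals `f 0` on the lower half
of a ball around `0`, an open set accumulating at `0`, and the identity theorem for analytic
functions makes `f` constant near `0`.
-/

open Filter Topology Set

theorem AnalyticAt.eventuallyEq_of_eqOn_of_mem_closure {𝕜 E F : Type*}
    [NontriviallyNormedField 𝕜] [NormedAddCommGroup E] [NormedSpace 𝕜 E] [NormedSpace ℝ E]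
    [NormedAddCommGroup F] [NormedSpace 𝕜 F] [CompleteSpace F] {f g : E → F} {x : E}
    {U : Set E}
    (hf : AnalyticAt 𝕜 f x) (hg : AnalyticAt 𝕜 g x) (hU : IsOpen U) (hxU : x ∈ closure U)
    (hfg : EqOn f g U) : f =ᶠ[𝓝 x] g := by
  obtain ⟨r, hr, hfr⟩ := hf.exists_ball_analyticOnNhd
  obtain ⟨s, hs, hgs⟩ := hg.exists_ball_analyticOnNhd
  have hball : Metric.ball x (min r s) ⊆ Metric.ball x r ∩ Metric.ball x s :=
    subset_inter (Metric.ball_subset_ball (min_le_left r s))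
      (Metric.ball_subset_ball (min_le_right r s))
  obtain ⟨p, hp, hpU⟩ := mem_closure_iff.mp hxU _ Metric.isOpen_ball
    (Metric.mem_ball_self (lt_min hr hs))
  have hfg_ball : EqOn f g (Metric.ball x (min r s)) :=
    (hfr.mono fun z hz => (hball hz).1).eqOn_of_preconnected_of_eventuallyEq
      (hgs.mono fun z hz => (hball hz).2) Metric.isPreconnected_ball hp
      (eventually_of_mem (hU.mem_nhds hpU) hfg)
  exact eventually_of_mem (Metric.ball_mem_nhds x (lt_min hr hs)) hfg_ball

theorem eq_of_tendsto_of_apply_succ_eq {X Y : Type*} [TopologicalSpace X] [TopologicalSpace Y]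
    [T2Space Y] {f : X → Y} {u : ℕ → X} {p : X} (hf : ContinuousAt f p)
    (hu : Tendsto u atTop (𝓝 p)) (hstep : ∀ n, f (u (n + 1)) = f (u n)) : f (u 0) = f p := by
  have hconst : ∀ n, f (u n) = f (u 0) := fun n => by
    induction n with
    | zero => rfl
    | succ n ih => rw [hstep, ih]
  exact tendsto_nhds_unique (tendsto_const_nhds.congr fun n => (hconst n).symm)
    (hf.tendsto.comp hu)

theorem one_le_one_sub_natCast_mul {y : ℝ} (hy : y ≤ 0) (n : ℕ) : 1 ≤ 1 - n * y := by
  nlinarith [n.cast_nonneg (α := ℝ)]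

noncomputable def unipotentMap (l : ℝ) (z : ℝ × ℝ) : ℝ × ℝ :=
  (l * z.1 / (1 + z.2), z.2 / (1 + z.2))

/-- `φ⁻ⁿ z`; in the chart `(x/y, 1/y)` it is `(u, v) ↦ (λ⁻ⁿ u, v - n)`. -/
noncomputable def unipotentMapInvIter (l : ℝ) (z : ℝ × ℝ) (n : ℕ) : ℝ × ℝ :=
  (z.1 / (l ^ n * (1 - n * z.2)), z.2 / (1 - n * z.2))

namespace unipotentMapInvIter

variable {l : ℝ} {z : ℝ × ℝ}

@[simp]
theorem zero : unipotentMapInvIter l z 0 = z := by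
  simp [unipotentMapInvIter]

theorem unipotentMap_succ (hl : l ≠ 0) (n : ℕ) (hn : 1 - n * z.2 ≠ 0)
    (hn' : 1 - (n + 1) * z.2 ≠ 0) :
    unipotentMap l (unipotentMapInvIter l z (n + 1)) = unipotentMapInvIter l z n := by
  have hsum : 1 + z.2 / (1 - (n + 1) * z.2) = (1 - n * z.2) / (1 - (n + 1) * z.2) := by
    rw [eq_div_iff hn', add_mul, div_mul_cancel₀ _ hn']
    ring
  simp only [unipotentMap, unipotentMapInvIter, Nat.cast_succ, hsum]
  ext
  · field_simp
    ring
  · exact div_div_div_cancel_right₀ hn' _ _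

theorem norm_le (hl : 1 ≤ l) (hz : z.2 ≤ 0) (n : ℕ) :
    ‖unipotentMapInvIter l z n‖ ≤ ‖z‖ := by
  have hd := one_le_one_sub_natCast_mul hz n
  have hd' : 1 ≤ l ^ n * (1 - n * z.2) :=
    one_le_mul_of_one_le_of_one_le (one_le_pow₀ hl) hd
  have hdiv : ∀ a d : ℝ, 1 ≤ d → |a / d| ≤ |a| := fun a d hd => by
    rw [abs_div]; exact div_le_self (abs_nonneg a) (hd.trans (le_abs_self d))
  simp only [unipotentMapInvIter, Prod.norm_def, Real.norm_eq_abs]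
  exact max_le_max (hdiv _ _ hd') (hdiv _ _ hd)

theorem tendsto_zero (hl : 1 < l) (hz : z.2 ≤ 0) :
    Tendsto (unipotentMapInvIter l z) atTop (𝓝 0) := by
  have hfst : Tendsto (fun n : ℕ => l ^ n * (1 - n * z.2)) atTop atTop :=
    tendsto_atTop_mono (fun n => le_mul_of_one_le_right (by positivity)
      (one_le_one_sub_natCast_mul hz n)) (tendsto_pow_atTop_atTop_of_one_lt hl)
  have hsnd : Tendsto (fun n : ℕ => z.2 / (1 - n * z.2)) atTop (𝓝 0) := by
    rcases hz.lt_or_eq with hneg | hzero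
    · have h : Tendsto (fun n : ℕ => (n : ℝ) * -z.2) atTop atTop :=
        tendsto_natCast_atTop_atTop.atTop_mul_const (neg_pos.mpr hneg)
      exact tendsto_const_nhds.div_atTop
        ((tendsto_atTop_add_const_left _ 1 h).congr fun n => by ring)
    · simp [hzero]
  rw [← Prod.mk_zero_zero]
  exact (tendsto_const_nhds.div_atTop hfst).prodMk_nhds hsnd

end unipotentMapInvIter

theorem eq_apply_zero_of_unipotentMap_invariant {l ε : ℝ} (hl : 1 < l) {f : ℝ × ℝ → ℝ}
    (hf : ContinuousAt f 0)
    (hinv : ∀ z ∈ Metric.ball (0 : ℝ × ℝ) ε, f (unipotentMap l z) = f z)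
    {z : ℝ × ℝ} (hzε : z ∈ Metric.ball 0 ε) (hz : z.2 ≤ 0) : f z = f 0 := by
  have hmem : ∀ n, unipotentMapInvIter l z n ∈ Metric.ball 0 ε := fun n => by
    rw [mem_ball_zero_iff] at hzε ⊢
    exact (unipotentMapInvIter.norm_le hl.le hz n).trans_lt hzε
  have hstep : ∀ n, f (unipotentMapInvIter l z (n + 1)) = f (unipotentMapInvIter l z n) :=
    fun n => by
      have hd := one_le_one_sub_natCast_mul hz n
      have hd' : 1 ≤ 1 - ((n : ℝ) + 1) * z.2 := by
        exact_mod_cast one_le_one_sub_natCast_mul hz (n + 1)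
      rw [← hinv _ (hmem (n + 1)), unipotentMapInvIter.unipotentMap_succ (by positivity) n
        (by linarith) (by linarith)]
  simpa using eq_of_tendsto_of_apply_succ_eq hf (unipotentMapInvIter.tendsto_zero hl hz) hstep

theorem zero_mem_closure_ball_inter_lowerHalf {ε : ℝ} (hε : 0 < ε) :
    (0 : ℝ × ℝ) ∈ closure (Metric.ball 0 ε ∩ {z | z.2 < 0}) := by
  have hlower : (0 : ℝ × ℝ) ∈ closure {z : ℝ × ℝ | z.2 < 0} := by
    have h : Tendsto (fun t : ℝ => ((0 : ℝ), t)) (𝓝[<] 0) (𝓝 0) :=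
      (Continuous.prodMk_right (0 : ℝ)).continuousAt.tendsto.mono_left nhdsWithin_le_nhds
    exact mem_closure_of_tendsto h eventually_mem_nhdsWithin
  exact Metric.isOpen_ball.inter_closure ⟨Metric.mem_ball_self hε, hlower⟩

/-- A real-analytic local first integral of the unipotent (non-diagonalizable)
hyperbolic projective map `φ(x,y) = (λx/(1+y), y/(1+y))`, `λ > 1`, is constant near the
origin: the formal first integrals `(x/y)·exp(−log(λ)/y)` are not real-analytic at `0`. -/
theorem stmt15 (l : ℝ) (hl : 1 < l)
    (f : ℝ × ℝ → ℝ) (hf : AnalyticAt ℝ f 0)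
    (hinv : ∀ᶠ z : ℝ × ℝ in nhds 0,
      f (l * z.1 / (1 + z.2), z.2 / (1 + z.2)) = f z) :
    ∀ᶠ z : ℝ × ℝ in nhds 0, f z = f 0 := by
  obtain ⟨ε, hε, hball⟩ := Metric.eventually_nhds_iff_ball.mp hinv
  have hlower : EqOn f (fun _ => f 0) (Metric.ball 0 ε ∩ {z | z.2 < 0}) := fun z hz =>
    eq_apply_zero_of_unipotentMap_invariant hl hf.continuousAt hball hz.1 (le_of_lt hz.2)
  exact hf.eventuallyEq_of_eqOn_of_mem_closure analyticAt_const
    (Metric.isOpen_ball.inter (isOpen_lt continuous_snd continuous_const))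
    (zero_mem_closure_ball_inter_lowerHalf hε) hlower
end

section
/- Let A : ℂ² → ℂ² be a ℂ-linear automorphism that is diagonalizable with eigenvalues λ, μ ∈ ℂ satisfying |λ| > |μ| > 0. Suppose P ⊆ ℂ² is an ℝ-linear subspace of real dimension 2 which is NOT a ℂ-linear subspace (i.e. P is not a complex line), and suppose A(P) ⊆ P. Then both eigenvalues are real: λ ∈ ℝ and μ ∈ ℝ. -/
/-!
The restriction of `A` to `P` has a real characteristic polynomial `χ` of degree 2. A complex
line inside `P` would equal `P`, so `P` lies in neither eigenline and each coordinate functional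
of the eigenbasis is nonzero somewhere on `P`; these functionals are left eigenvectors of `A`, so
`λ` and `μ` are both roots of `χ`. A non-real root brings its conjugate along, and since
`|λ| ≠ |μ|` this would give `χ` three distinct roots.
-/

open Polynomial ComplexConjugate Module

theorem im_eq_zero_of_aeval_eq_zero_of_norm_ne {p : ℝ[X]} (hp : p ≠ 0) (hdeg : p.natDegree ≤ 2)
    {z w : ℂ} (hz : aeval z p = 0) (hw : aeval w p = 0) (hzw : ‖w‖ ≠ ‖z‖) : z.im = 0 := by
  classical
  by_contra hzim
  set q := p.map (algebraMap ℝ ℂ)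
  have hroot : ∀ x : ℂ, aeval x p = 0 → x ∈ q.roots := fun x hx =>
    (mem_roots_map_of_injective (algebraMap ℝ ℂ).injective hp).2 (by rwa [← aeval_def])
  have hconj : conj z ≠ z := fun h => hzim (Complex.conj_eq_iff_im.1 h)
  have hwz : w ≠ z := fun h => hzw (h ▸ rfl)
  have hwconj : w ≠ conj z := fun h => hzw (by rw [h, Complex.norm_conj])
  have hsub : ({z, conj z, w} : Finset ℂ).val ⊆ q.roots := by
    intro x hx
    simp only [Finset.insert_val, Finset.mem_val, Finset.mem_singleton,
      Multiset.mem_ndinsert] at hx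
    rcases hx with rfl | rfl | rfl
    · exact hroot _ hz
    · exact hroot _ (by rw [aeval_conj, hz, map_zero])
    · exact hroot _ hw
  have hcard := card_le_degree_of_subset_roots hsub
  rw [Finset.card_insert_of_notMem (by simp [hconj.symm, hwz.symm]),
    Finset.card_pair hwconj.symm, natDegree_map] at hcard
  omega

theorem aeval_apply_eq_mul_of_apply_eq_mul {V : Type*} [AddCommGroup V] [Module ℝ V]
    (f : End ℝ V) (φ : V →ₗ[ℝ] ℂ) (z : ℂ) (hφ : ∀ v, φ (f v) = z * φ v) (q : ℝ[X]) (v : V) :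
    φ (aeval f q v) = aeval z q * φ v := by
  induction q using Polynomial.induction_on generalizing v with
  | C a => simp [Algebra.algebraMap_eq_smul_one, Complex.real_smul]
  | add p q hp hq => simp [hp, hq, add_mul]
  | monomial n a ih =>
    rw [pow_succ, ← mul_assoc, map_mul (aeval f) _ X, map_mul (aeval z) _ X, aeval_X, aeval_X,
      End.mul_apply, ih, hφ]
    ring

theorem aeval_charpoly_eq_zero_of_apply_eq_mul {V : Type*} [AddCommGroup V] [Module ℝ V]
    [FiniteDimensional ℝ V] (f : End ℝ V) (φ : V →ₗ[ℝ] ℂ) (z : ℂ)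
    (hφ : ∀ v, φ (f v) = z * φ v) {v : V} (hv : φ v ≠ 0) : aeval z f.charpoly = 0 := by
  have h := aeval_apply_eq_mul_of_apply_eq_mul f φ z hφ f.charpoly v
  rw [LinearMap.aeval_self_charpoly, LinearMap.zero_apply, map_zero] at h
  exact (mul_eq_zero.1 h.symm).resolve_right hv

theorem Module.Basis.coord_apply_eq_mul {ι R M : Type*} [CommSemiring R] [AddCommMonoid M]
    [Module R M] (B : Basis ι R M) (A : M →ₗ[R] M) (c : ι → R) (hA : ∀ i, A (B i) = c i • B i)
    (i : ι) (v : M) : B.coord i (A v) = c i * B.coord i v := by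
  classical
  refine LinearMap.congr_fun (B.ext (f₁ := B.coord i ∘ₗ A) (f₂ := c i • B.coord i) fun j => ?_) v
  by_cases hij : i = j
  · subst hij; simp [hA]
  · simp [hA, hij]

variable {E : Type*} [AddCommGroup E] [Module ℂ E] [FiniteDimensional ℂ E]

theorem smul_I_mem_of_le_restrictScalars {P : Submodule ℝ E} (hP : finrank ℝ P = 2)
    {L : Submodule ℂ E} (hL : finrank ℂ L = 1) (hPL : P ≤ L.restrictScalars ℝ) :
    ∀ v ∈ P, Complex.I • v ∈ P := by
  have hL' : finrank ℝ (L.restrictScalars ℝ) = 2 := by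
    change finrank ℝ L = 2
    rw [← finrank_mul_finrank ℝ ℂ L, hL, Complex.finrank_real_complex]
  obtain rfl : P = L.restrictScalars ℝ := Submodule.eq_of_le_of_finrank_le hPL (by rw [hL', hP])
  exact fun v hv => L.smul_mem Complex.I hv

theorem exists_mem_apply_ne_zero_of_not_smul_I_mem (hE : finrank ℂ E = 2) {P : Submodule ℝ E}
    (hP : finrank ℝ P = 2) (hnotc : ¬ ∀ v ∈ P, Complex.I • v ∈ P) {φ : Dual ℂ E} (hφ : φ ≠ 0) :
    ∃ u ∈ P, φ u ≠ 0 := by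
  by_contra! h
  have hker : finrank ℂ (LinearMap.ker φ) = 1 := by
    have := Dual.finrank_ker_add_one_of_ne_zero hφ
    omega
  exact hnotc (smul_I_mem_of_le_restrictScalars hP hker fun u hu => h u hu)

theorem stmt16_general (A : (ℂ × ℂ) →ₗ[ℂ] (ℂ × ℂ))
    (lam mu : ℂ) (e₁ e₂ : ℂ × ℂ)
    (hind : LinearIndependent ℂ ![e₁, e₂])
    (he₁ : A e₁ = lam • e₁) (he₂ : A e₂ = mu • e₂)
    (habs : ‖mu‖ < ‖lam‖)
    (P : Submodule ℝ (ℂ × ℂ)) (hdim : Module.finrank ℝ P = 2)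
    (hnotc : ¬ ∀ v ∈ P, Complex.I • v ∈ P)
    (hinv : ∀ v ∈ P, A v ∈ P) :
    lam.im = 0 ∧ mu.im = 0 := by
  have hE : finrank ℂ (ℂ × ℂ) = 2 := by simp [Module.finrank_prod]
  let B := basisOfLinearIndependentOfCardEqFinrank hind (by simp [hE])
  have hAB : ∀ i, A (B i) = ![lam, mu] i • B i := by
    intro i; fin_cases i <;> simp [B, he₁, he₂]
  let f : End ℝ P := (A.restrictScalars ℝ).restrict hinv
  have hroot : ∀ i, aeval (![lam, mu] i) f.charpoly = 0 := by
    intro i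
    obtain ⟨u, hu, hBu⟩ := exists_mem_apply_ne_zero_of_not_smul_I_mem hE hdim hnotc
      (φ := B.coord i) fun h => by simpa using LinearMap.congr_fun h (B i)
    exact aeval_charpoly_eq_zero_of_apply_eq_mul f ((B.coord i).restrictScalars ℝ ∘ₗ P.subtype) _
      (fun v => B.coord_apply_eq_mul A _ hAB i v) (v := ⟨u, hu⟩) hBu
  have hχ : f.charpoly ≠ 0 := f.charpoly_monic.ne_zero
  have hdeg : f.charpoly.natDegree ≤ 2 := by rw [LinearMap.charpoly_natDegree, hdim]
  exact ⟨im_eq_zero_of_aeval_eq_zero_of_norm_ne hχ hdeg (hroot 0) (hroot 1) habs.ne,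
    im_eq_zero_of_aeval_eq_zero_of_norm_ne hχ hdeg (hroot 1) (hroot 0) habs.ne'⟩

/-- If a ℂ-linear automorphism `A` of `ℂ²`, diagonalizable with eigenvalues `λ, μ`
satisfying `|λ| > |μ| > 0`, stabilizes a real 2-dimensional ℝ-subspace `P ⊆ ℂ²` which is
not a complex line, then both eigenvalues are real. -/
theorem stmt16 (A : (ℂ × ℂ) →ₗ[ℂ] (ℂ × ℂ)) (hbij : Function.Bijective A)
    (lam mu : ℂ) (e₁ e₂ : ℂ × ℂ)
    (hind : LinearIndependent ℂ ![e₁, e₂])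
    (he₁ : A e₁ = lam • e₁) (he₂ : A e₂ = mu • e₂)
    (habs : ‖mu‖ < ‖lam‖) (hmu : 0 < ‖mu‖)
    (P : Submodule ℝ (ℂ × ℂ)) (hdim : Module.finrank ℝ P = 2)
    (hnotc : ¬ ∀ v ∈ P, Complex.I • v ∈ P)
    (hinv : ∀ v ∈ P, A v ∈ P) :
    lam.im = 0 ∧ mu.im = 0 :=
  stmt16_general A lam mu e₁ e₂ hind he₁ he₂ habs P hdim hnotc hinv
end

section
/- Let λ, μ be nonzero real numbers with λ ≠ μ, and let A : ℂ² → ℂ² be the ℂ-linear map A(x,y) = (λ·x, μ·y). Suppose P ⊆ ℂ² is an ℝ-linear subspace of real dimension 2 which is not a ℂ-linear subspace, and suppose A(P) ⊆ P. Then there exist unit complex numbers ζ₁, ζ₂ (equivalently, angles α₁, α₂) such that P = (ℝ·ζ₁) × (ℝ·ζ₂) = {(x,y) ∈ ℂ² : x ∈ e^{iα₁}·ℝ and y ∈ e^{iα₂}·ℝ}. In particular, P is a totally real plane which is a product of a real line in each coordinate axis. -/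
/-!
Invariance under `diag(l, m)` with `l ≠ m` splits `P` as a product `Q₁ × Q₂` of real subspaces
of the coordinate axes, whose dimensions add up to 2. A real subspace of `ℂ` of dimension 0 or 2
is a complex subspace, so, `P` not being a complex line, both `Qᵢ` are real lines `ℝ ζᵢ`.
-/

open Module Submodule

namespace Submodule

variable {K M₁ M₂ : Type*} [DivisionRing K] [AddCommGroup M₁] [Module K M₁] [AddCommGroup M₂]
  [Module K M₂]

theorem eq_prod_comap_inl_comap_inr_of_smul_mem {a b : K} (hab : a ≠ b)
    {P : Submodule K (M₁ × M₂)} (hP : ∀ v ∈ P, (a • v.1, b • v.2) ∈ P) :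
    P = (P.comap (LinearMap.inl K M₁ M₂)).prod (P.comap (LinearMap.inr K M₁ M₂)) := by
  ext v
  simp only [mem_prod, mem_comap, LinearMap.inl_apply, LinearMap.inr_apply]
  constructor
  · intro hv
    have h₂ : ((0 : M₁), v.2) ∈ P := by
      convert P.smul_mem (a - b)⁻¹ (P.sub_mem (P.smul_mem a hv) (hP v hv)) using 1
      ext
      · simp
      · simp only [Prod.snd_sub, Prod.smul_snd]
        rw [← sub_smul, smul_smul, inv_mul_cancel₀ (sub_ne_zero.mpr hab), one_smul]
    refine ⟨?_, h₂⟩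
    convert P.sub_mem hv h₂ using 1
    ext <;> simp
  · rintro ⟨h₁, h₂⟩
    simpa using P.add_mem h₁ h₂

theorem finrank_prod (Q₁ : Submodule K M₁) (Q₂ : Submodule K M₂)
    [FiniteDimensional K Q₁] [FiniteDimensional K Q₂] :
    finrank K (Q₁.prod Q₂) = finrank K Q₁ + finrank K Q₂ := by
  have hinj : Function.Injective (Q₁.subtype.prodMap Q₂.subtype) := by
    rw [LinearMap.coe_prodMap]
    exact Q₁.injective_subtype.prodMap Q₂.injective_subtype
  rw [← Module.finrank_prod, ← LinearMap.finrank_range_of_inj hinj, LinearMap.range_prodMap,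
    range_subtype, range_subtype]

theorem exists_norm_eq_one_eq_span_singleton {𝕜 E : Type*} [RCLike 𝕜] [NormedAddCommGroup E]
    [NormedSpace 𝕜 E] {Q : Submodule 𝕜 E} (hQ : finrank 𝕜 Q = 1) :
    ∃ ζ : E, ‖ζ‖ = 1 ∧ Q = 𝕜 ∙ ζ := by
  have : FiniteDimensional 𝕜 Q := Module.finite_of_finrank_pos (hQ ▸ one_pos)
  have : Q.IsPrincipal := (finrank_le_one_iff_isPrincipal Q).mp hQ.le
  obtain ⟨w, rfl⟩ := IsPrincipal.principal Q
  have hw : w ≠ 0 := by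
    rintro rfl
    rw [span_zero_singleton, finrank_bot] at hQ
    exact zero_ne_one hQ
  refine ⟨(‖w‖⁻¹ : 𝕜) • w, norm_smul_inv_norm hw, (span_singleton_smul_eq ?_ w).symm⟩
  exact isUnit_iff_ne_zero.mpr (by simpa using hw)

theorem I_mul_mem_of_finrank_ne_one {Q : Submodule ℝ ℂ} (hQ : finrank ℝ Q ≠ 1) {z : ℂ}
    (hz : z ∈ Q) : Complex.I * z ∈ Q := by
  have hle : finrank ℝ Q ≤ 2 := Complex.finrank_real_complex ▸ Q.finrank_le
  interval_cases h : finrank ℝ Q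
  · rw [finrank_eq_zero.mp h] at hz ⊢
    simp_all
  · contradiction
  · rw [eq_top_of_finrank_eq (h.trans Complex.finrank_real_complex.symm)]
    trivial

end Submodule

theorem stmt17_general (l m : ℝ) (hlm : l ≠ m)
    (P : Submodule ℝ (ℂ × ℂ)) (hdim : Module.finrank ℝ P = 2)
    (hnotc : ¬ ∀ v ∈ P, Complex.I • v ∈ P)
    (hinv : ∀ v ∈ P, ((l : ℂ) * v.1, (m : ℂ) * v.2) ∈ P) :
    ∃ ζ₁ ζ₂ : ℂ, ‖ζ₁‖ = 1 ∧ ‖ζ₂‖ = 1 ∧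
      (P : Set (ℂ × ℂ)) =
        {p : ℂ × ℂ | ∃ s t : ℝ, p = ((s : ℂ) * ζ₁, (t : ℂ) * ζ₂)} := by
  have hP := eq_prod_comap_inl_comap_inr_of_smul_mem hlm (P := P)
    (by simpa only [Complex.real_smul] using hinv)
  set Q₁ := P.comap (LinearMap.inl ℝ ℂ ℂ)
  set Q₂ := P.comap (LinearMap.inr ℝ ℂ ℂ)
  have hsum : finrank ℝ Q₁ + finrank ℝ Q₂ = 2 := by rw [← Submodule.finrank_prod, ← hP, hdim]
  have hline : finrank ℝ Q₁ = 1 ∧ finrank ℝ Q₂ = 1 := by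
    by_contra h
    have hne : finrank ℝ Q₁ ≠ 1 ∧ finrank ℝ Q₂ ≠ 1 := by omega
    refine hnotc fun v hv ↦ ?_
    rw [hP, mem_prod] at hv ⊢
    exact ⟨I_mul_mem_of_finrank_ne_one hne.1 hv.1, I_mul_mem_of_finrank_ne_one hne.2 hv.2⟩
  obtain ⟨ζ₁, hζ₁, hQ₁⟩ := exists_norm_eq_one_eq_span_singleton hline.1
  obtain ⟨ζ₂, hζ₂, hQ₂⟩ := exists_norm_eq_one_eq_span_singleton hline.2
  refine ⟨ζ₁, ζ₂, hζ₁, hζ₂, ?_⟩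
  ext ⟨x, y⟩
  rw [SetLike.mem_coe, hP, mem_prod, hQ₁, hQ₂]
  simp [mem_span_singleton, Complex.real_smul, eq_comm]

/-- If the ℂ-linear map `A(x,y) = (λx, μy)` with `λ, μ` nonzero distinct reals stabilizes
a real 2-dimensional ℝ-subspace `P ⊆ ℂ²` which is not a complex line, then `P` is a
totally real plane of the form `(ℝ·ζ₁) × (ℝ·ζ₂)` for some unit complex numbers `ζ₁, ζ₂`
(equivalently `P = {x ∈ e^{iα₁}ℝ, y ∈ e^{iα₂}ℝ}`). -/
theorem stmt17 (l m : ℝ) (hl : l ≠ 0) (hm : m ≠ 0) (hlm : l ≠ m)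
    (P : Submodule ℝ (ℂ × ℂ)) (hdim : Module.finrank ℝ P = 2)
    (hnotc : ¬ ∀ v ∈ P, Complex.I • v ∈ P)
    (hinv : ∀ v ∈ P, ((l : ℂ) * v.1, (m : ℂ) * v.2) ∈ P) :
    ∃ ζ₁ ζ₂ : ℂ, ‖ζ₁‖ = 1 ∧ ‖ζ₂‖ = 1 ∧
      (P : Set (ℂ × ℂ)) =
        {p : ℂ × ℂ | ∃ s t : ℝ, p = ((s : ℂ) * ζ₁, (t : ℂ) * ζ₂)} :=
  stmt17_general l m hlm P hdim hnotc hinv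
end
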